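/- arXiv:math/0211305 — 7 statements merged into one kernel-verified Lean document; each statement's English description precedes it below -/
import Mathlib

section
/- Let d, N be positive integers, m ≥ 0, μ > 0, ε > 0, and s ∈ ℂ. Let a : ℝ^d × ℝ^N → ℝ be a real-valued symbol of type (1,0) and order m with a(x,ξ) ≥ ε for all (x,ξ) and a(x,ξ) ≥ μ^{-1}·⟨ξ⟩^m whenever ‖ξ‖ ≥ μ. Then the complex power (x,ξ) ↦ a(x,ξ)^s := exp(s·log a(x,ξ)) is a symbol of type (1,0) and order m·Re(s). -/
/-!
Fix `ξ₀`, put `t = ⟨ξ₀⟩` and rescale the frequency variable: `aₜ(y, η) = a(y, ξ₀ + t • η)`.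
The symbol estimates say exactly that every mixed derivative of `aₜ` at `(x, 0)` is `O(t^m)`;
since iterated derivatives are symmetric, a full derivative on the product space splits into
`2^n` mixed ones, so all derivatives of `aₜ` at `(x, 0)` are `O(t^m)` too. Ellipticity gives
`a(x, ξ₀) ≍ t^m`, so `aₜ / a(x, ξ₀)` equals `1` at `(x, 0)` and has derivatives bounded
independently of `(x, ξ₀)`, and Faà di Bruno bounds the derivatives of its `s`-th power.
By homogeneity `aₜ^s = a(x, ξ₀)^s · (aₜ / a(x, ξ₀))^s` with `‖a(x, ξ₀)^s‖ ≍ t^(m Re s)`, and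
undoing the rescaling costs `t^(-l)` for `l` derivatives in `ξ`.
-/

/-- `⟨ξ⟩ := (1 + ‖ξ‖²)^{1/2}`. -/
noncomputable def jap {N : ℕ} (ξ : EuclideanSpace ℝ (Fin N)) : ℝ :=
  (1 + ‖ξ‖ ^ 2) ^ ((1 : ℝ) / 2)

/-- `a : ℝ^d × ℝ^N → F` is a symbol of type `(1,0)` and order `m`:
it is smooth, and for all `j, l` the iterated derivative of order `j` in `x`
and order `l` in `ξ` is bounded by `C(j,l) ⟨ξ⟩^{m-l}`. -/
def IsSymbol (d N : ℕ) (m : ℝ) {F : Type*} [NormedAddCommGroup F] [NormedSpace ℝ F]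
    (a : EuclideanSpace ℝ (Fin d) → EuclideanSpace ℝ (Fin N) → F) : Prop :=
  ContDiff ℝ (⊤ : ℕ∞)
      (fun p : EuclideanSpace ℝ (Fin d) × EuclideanSpace ℝ (Fin N) => a p.1 p.2) ∧
    ∀ j l : ℕ, ∃ C : ℝ, ∀ (x : EuclideanSpace ℝ (Fin d)) (ξ : EuclideanSpace ℝ (Fin N)),
      ‖iteratedFDeriv ℝ j (fun x' => iteratedFDeriv ℝ l (fun ξ' => a x' ξ') ξ) x‖ ≤
        C * jap ξ ^ (m - l)

open scoped ContDiff Nat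

section IteratedFDerivAlong

variable {E F : Type*} [NormedAddCommGroup E] [NormedSpace ℝ E]
  [NormedAddCommGroup F] [NormedSpace ℝ F]

noncomputable def iteratedFDerivAlong : List E → (E → F) → E → F
  | [], f => f
  | v :: l, f => fun x => fderiv ℝ (iteratedFDerivAlong l f) x v

theorem iteratedFDerivAlong_append (l₁ l₂ : List E) (f : E → F) :
    iteratedFDerivAlong (l₁ ++ l₂) f = iteratedFDerivAlong l₁ (iteratedFDerivAlong l₂ f) := by
  induction l₁ with
  | nil => rfl
  | cons v l ih => simp only [List.cons_append, iteratedFDerivAlong, ih]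

theorem contDiff_iteratedFDerivAlong (l : List E) {f : E → F} (hf : ContDiff ℝ ∞ f) :
    ContDiff ℝ ∞ (iteratedFDerivAlong l f) := by
  induction l with
  | nil => exact hf
  | cons v l ih => exact (ih.fderiv_right le_rfl).clm_apply contDiff_const

theorem iteratedFDeriv_apply_eq_iteratedFDerivAlong {f : E → F} (hf : ContDiff ℝ ∞ f) {n : ℕ}
    (x : E) (m : Fin n → E) :
    iteratedFDeriv ℝ n f x m = iteratedFDerivAlong (List.ofFn m) f x := by
  induction n generalizing x with
  | zero => simp [iteratedFDerivAlong]
  | succ n ih =>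
    have hd : Differentiable ℝ (iteratedFDeriv ℝ n f) :=
      hf.differentiable_iteratedFDeriv (WithTop.coe_lt_coe.2 (ENat.natCast_lt_top n))
    rw [iteratedFDeriv_succ_apply_left, List.ofFn_succ, iteratedFDerivAlong,
      ← fderiv_continuousMultilinear_apply_const_apply (hd x)]
    congr 2
    funext y
    exact ih y (Fin.tail m)

theorem norm_iteratedFDerivAlong_le {f : E → F} (hf : ContDiff ℝ ∞ f) (L : List E) (x : E) :
    ‖iteratedFDerivAlong L f x‖ ≤ ‖iteratedFDeriv ℝ L.length f x‖ * (L.map norm).prod := by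
  have h := (iteratedFDeriv ℝ L.length f x).le_opNorm L.get
  rw [iteratedFDeriv_apply_eq_iteratedFDerivAlong hf, List.ofFn_get] at h
  convert h using 3
  conv_lhs => rw [← List.ofFn_get L]
  rw [List.map_ofFn, List.prod_ofFn]
  rfl

theorem iteratedFDerivAlong_swap {f : E → F} (hf : ContDiff ℝ ∞ f) (v w : E) :
    iteratedFDerivAlong [v, w] f = iteratedFDerivAlong [w, v] f := by
  have hd : Differentiable ℝ (fderiv ℝ f) :=
    (hf.fderiv_right (m := ∞) le_rfl).differentiable (by simp)
  funext x
  simp only [iteratedFDerivAlong]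
  rw [fderiv_clm_apply (hd x) (differentiableAt_const w),
    fderiv_clm_apply (hd x) (differentiableAt_const v)]
  simpa using (hf.contDiffAt.isSymmSndFDerivAt (by simp; exact WithTop.coe_le_coe.2 le_top)).eq v w

theorem iteratedFDerivAlong_perm {l l' : List E} (h : l.Perm l') {f : E → F}
    (hf : ContDiff ℝ ∞ f) : iteratedFDerivAlong l f = iteratedFDerivAlong l' f := by
  induction h with
  | nil => rfl
  | cons v _ ih => simp only [iteratedFDerivAlong, ih]
  | swap v w l =>
    change iteratedFDerivAlong ([_, _] ++ l) f = iteratedFDerivAlong ([_, _] ++ l) f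
    rw [iteratedFDerivAlong_append, iteratedFDerivAlong_append,
      iteratedFDerivAlong_swap (contDiff_iteratedFDerivAlong l hf)]
  | trans _ _ ih1 ih2 => rw [ih1, ih2]

theorem iteratedFDerivAlong_append_cons_add (l₁ l₂ : List E) (v w : E) {f : E → F}
    (hf : ContDiff ℝ ∞ f) :
    iteratedFDerivAlong (l₁ ++ (v + w) :: l₂) f =
      iteratedFDerivAlong (l₁ ++ v :: l₂) f + iteratedFDerivAlong (l₁ ++ w :: l₂) f := by
  induction l₁ with
  | nil => funext x; exact map_add _ v w
  | cons u l ih =>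
    funext x
    simp only [List.cons_append, iteratedFDerivAlong]
    have hd (l' : List E) : Differentiable ℝ (iteratedFDerivAlong l' f) :=
      (contDiff_iteratedFDerivAlong l' hf).differentiable (by simp)
    rw [ih, fderiv_add (hd _ x) (hd _ x)]
    rfl

end IteratedFDerivAlong

section MixedFDeriv

open ContinuousLinearMap (inl inr)

variable {E G F : Type*} [NormedAddCommGroup E] [NormedSpace ℝ E]
  [NormedAddCommGroup G] [NormedSpace ℝ G] [NormedAddCommGroup F] [NormedSpace ℝ F]

theorem iteratedFDeriv_comp_add_clm {H : Type*} [NormedAddCommGroup H] [NormedSpace ℝ H]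
    {f : E → F} (hf : ContDiff ℝ ∞ f) (b : E) (L : H →L[ℝ] E) (i : ℕ) (z : H) :
    iteratedFDeriv ℝ i (fun z => f (b + L z)) z =
      (iteratedFDeriv ℝ i f (b + L z)).compContinuousLinearMap fun _ => L := by
  have hb : ContDiff ℝ ∞ fun y => f (b + y) := hf.comp (contDiff_const.add contDiff_id)
  rw [show (fun z => f (b + L z)) = (fun y => f (b + y)) ∘ L from rfl,
    L.iteratedFDeriv_comp_right hb z (mod_cast le_top), iteratedFDeriv_comp_add_left]

theorem iteratedFDeriv_comp_add_smul {f : E → F} (hf : ContDiff ℝ ∞ f) (b : E) (t : ℝ) (i : ℕ)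
    (z : E) :
    iteratedFDeriv ℝ i (fun z => f (b + t • z)) z = t ^ i • iteratedFDeriv ℝ i f (b + t • z) := by
  ext v
  have h := iteratedFDeriv_comp_add_clm hf b (t • ContinuousLinearMap.id ℝ E) i z
  simp only [smul_apply, ContinuousLinearMap.id_apply] at h
  rw [h, ContinuousMultilinearMap.compContinuousLinearMap_apply]
  simp [ContinuousMultilinearMap.map_smul_univ]

theorem iteratedFDeriv_comp_prodMk_left {f : E × G → F} (hf : ContDiff ℝ ∞ f) (j : ℕ) (x : E)
    (ξ : G) :
    iteratedFDeriv ℝ j (fun x' => f (x', ξ)) x =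
      (iteratedFDeriv ℝ j f (x, ξ)).compContinuousLinearMap fun _ => inl ℝ E G := by
  simpa using iteratedFDeriv_comp_add_clm hf (0, ξ) (inl ℝ E G) j x

theorem iteratedFDeriv_comp_prodMk_right {f : E × G → F} (hf : ContDiff ℝ ∞ f) (l : ℕ) (x : E)
    (ξ : G) :
    iteratedFDeriv ℝ l (fun ξ' => f (x, ξ')) ξ =
      (iteratedFDeriv ℝ l f (x, ξ)).compContinuousLinearMap fun _ => inr ℝ E G := by
  simpa using iteratedFDeriv_comp_add_clm hf (x, 0) (inr ℝ E G) l ξ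

noncomputable def mixedFDeriv (j l : ℕ) (g : E → G → F) (x : E) (ξ : G) :
    E [×j]→L[ℝ] G [×l]→L[ℝ] F :=
  iteratedFDeriv ℝ j (fun x' => iteratedFDeriv ℝ l (fun ξ' => g x' ξ') ξ) x

theorem contDiff_iteratedFDeriv_curry_right {g : E → G → F}
    (hg : ContDiff ℝ ∞ (Function.uncurry g)) (l : ℕ) (ξ : G) :
    ContDiff ℝ ∞ fun x => iteratedFDeriv ℝ l (fun ξ' => g x ξ') ξ := by
  have hpartial : (fun x => iteratedFDeriv ℝ l (fun ξ' => g x ξ') ξ) = fun x =>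
      ContinuousMultilinearMap.compContinuousLinearMapL (fun _ => inr ℝ E G)
        (iteratedFDeriv ℝ l (Function.uncurry g) (x, ξ)) := by
    funext x
    exact iteratedFDeriv_comp_prodMk_right hg l x ξ
  rw [hpartial]
  exact (ContinuousMultilinearMap.compContinuousLinearMapL (F := F)
    fun _ : Fin l => inr ℝ E G).contDiff.comp
    ((hg.iteratedFDeriv_right (m := ∞) le_rfl).comp (contDiff_id.prodMk contDiff_const))

theorem mixedFDeriv_apply {g : E → G → F} (hg : ContDiff ℝ ∞ (Function.uncurry g)) (j l : ℕ)
    (x : E) (ξ : G) (u : Fin j → E) (v : Fin l → G) :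
    mixedFDeriv j l g x ξ u v =
      iteratedFDerivAlong ((List.ofFn u).map (inl ℝ E G) ++ (List.ofFn v).map (inr ℝ E G))
        (Function.uncurry g) (x, ξ) := by
  set H := iteratedFDerivAlong ((List.ofFn v).map (inr ℝ E G)) (Function.uncurry g)
  have hH : ContDiff ℝ ∞ H := contDiff_iteratedFDerivAlong _ hg
  have hinner : (fun x' => iteratedFDeriv ℝ l (fun ξ' => g x' ξ') ξ v) = fun x' => H (x', ξ) := by
    funext x'
    rw [show (fun ξ' => g x' ξ') = fun ξ' => Function.uncurry g (x', ξ') from rfl,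
      iteratedFDeriv_comp_prodMk_right hg, ContinuousMultilinearMap.compContinuousLinearMap_apply,
      iteratedFDeriv_apply_eq_iteratedFDerivAlong hg]
    simp only [H, List.map_ofFn, Function.comp_def]
  have happly :=
    (ContinuousMultilinearMap.apply ℝ (fun _ : Fin l => G) F v).iteratedFDeriv_comp_left
      ((contDiff_iteratedFDeriv_curry_right hg l ξ).contDiffAt (x := x)) (i := j) (mod_cast le_top)
  calc mixedFDeriv j l g x ξ u v
      = iteratedFDeriv ℝ j (fun x' => iteratedFDeriv ℝ l (fun ξ' => g x' ξ') ξ v) x u :=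
        (congrArg (fun M => M u) happly).symm
    _ = iteratedFDeriv ℝ j (fun x' => H (x', ξ)) x u := by rw [hinner]
    _ = iteratedFDerivAlong ((List.ofFn u).map (inl ℝ E G)) H (x, ξ) := by
        rw [iteratedFDeriv_comp_prodMk_left hH,
          ContinuousMultilinearMap.compContinuousLinearMap_apply,
          iteratedFDeriv_apply_eq_iteratedFDerivAlong hH]
        simp only [List.map_ofFn, Function.comp_def]
    _ = _ := (congrFun (iteratedFDerivAlong_append _ _ _) _).symm

theorem norm_mixedFDeriv_le {g : E → G → F} (hg : ContDiff ℝ ∞ (Function.uncurry g)) (j l : ℕ)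
    (x : E) (ξ : G) :
    ‖mixedFDeriv j l g x ξ‖ ≤ ‖iteratedFDeriv ℝ (j + l) (Function.uncurry g) (x, ξ)‖ := by
  refine ContinuousMultilinearMap.opNorm_le_bound (norm_nonneg _) fun u => ?_
  refine ContinuousMultilinearMap.opNorm_le_bound (by positivity) fun v => ?_
  rw [mixedFDeriv_apply hg]
  set L := (List.ofFn u).map (inl ℝ E G) ++ (List.ofFn v).map (inr ℝ E G)
  have hlen : L.length = j + l := by simp [L]
  refine (norm_iteratedFDerivAlong_le hg L _).trans (le_of_eq ?_)
  rw [hlen]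
  simp [L, List.prod_ofFn, Function.comp_def, mul_assoc]

theorem norm_iteratedFDerivAlong_le_of_sorted {f : E × G → F} (hf : ContDiff ℝ ∞ f) (p : E × G)
    {n : ℕ} {M : ℝ}
    (h : ∀ (us : List E) (vs : List G), us.length + vs.length = n →
      ‖iteratedFDerivAlong (us.map (inl ℝ E G) ++ vs.map (inr ℝ E G)) f p‖ ≤
        M * (us.map norm).prod * (vs.map norm).prod)
    (us : List E) (vs : List G) (L : List (E × G)) (hL : us.length + vs.length + L.length = n) :
    ‖iteratedFDerivAlong (us.map (inl ℝ E G) ++ vs.map (inr ℝ E G) ++ L) f p‖ ≤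
      M * (us.map norm).prod * (vs.map norm).prod * (L.map fun c => ‖c.1‖ + ‖c.2‖).prod := by
  induction L generalizing us vs with
  | nil => simpa using h us vs (by simpa using hL)
  | cons c L ih =>
    -- split `c = (c.1, 0) + (0, c.2)`; by symmetry `(c.1, 0)` may join the `x`-directions
    have hperm : (us.map (inl ℝ E G) ++ vs.map (inr ℝ E G) ++ inl ℝ E G c.1 :: L).Perm
        ((us ++ [c.1]).map (inl ℝ E G) ++ vs.map (inr ℝ E G) ++ L) := by
      simpa using (List.perm_middle (a := inl ℝ E G c.1) (l₁ := vs.map (inr ℝ E G))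
        (l₂ := L)).append_left (us.map (inl ℝ E G))
    have h₁ := ih (us ++ [c.1]) vs (by simp at hL ⊢; omega)
    have h₂ := ih us (vs ++ [c.2]) (by simp at hL ⊢; omega)
    rw [← iteratedFDerivAlong_perm hperm hf] at h₁
    rw [show c = inl ℝ E G c.1 + inr ℝ E G c.2 by simp,
      iteratedFDerivAlong_append_cons_add _ _ _ _ hf]
    calc _ ≤ _ := norm_add_le _ _
      _ ≤ _ := add_le_add h₁ (by simpa using h₂)
      _ = _ := by simp; ring

theorem norm_iteratedFDeriv_le_of_mixedFDeriv {g : E → G → F}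
    (hg : ContDiff ℝ ∞ (Function.uncurry g)) (x : E) (ξ : G) {n : ℕ} {M : ℝ}
    (h : ∀ j l, j + l = n → ‖mixedFDeriv j l g x ξ‖ ≤ M) :
    ‖iteratedFDeriv ℝ n (Function.uncurry g) (x, ξ)‖ ≤ 2 ^ n * M := by
  have hM : 0 ≤ M := (norm_nonneg (mixedFDeriv n 0 g x ξ)).trans (h n 0 rfl)
  have hsorted (us : List E) (vs : List G) (huv : us.length + vs.length = n) :
      ‖iteratedFDerivAlong (us.map (inl ℝ E G) ++ vs.map (inr ℝ E G)) (Function.uncurry g) (x, ξ)‖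
        ≤ M * (us.map norm).prod * (vs.map norm).prod := by
    have happly := mixedFDeriv_apply hg _ _ x ξ us.get vs.get
    rw [List.ofFn_get, List.ofFn_get] at happly
    rw [← happly]
    calc _ ≤ ‖mixedFDeriv _ _ g x ξ us.get‖ * ∏ i, ‖vs.get i‖ :=
          ContinuousMultilinearMap.le_opNorm _ _
      _ ≤ ‖mixedFDeriv _ _ g x ξ‖ * (∏ i, ‖us.get i‖) * ∏ i, ‖vs.get i‖ := by
        gcongr; exact ContinuousMultilinearMap.le_opNorm _ _
      _ ≤ M * (∏ i, ‖us.get i‖) * ∏ i, ‖vs.get i‖ := by gcongr; exact h _ _ huv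
      _ = _ := by simp [Fin.prod_univ_fun_getElem]
  refine ContinuousMultilinearMap.opNorm_le_bound (by positivity) fun w => ?_
  rw [iteratedFDeriv_apply_eq_iteratedFDerivAlong hg]
  calc _ ≤ M * ∏ i, (‖(w i).1‖ + ‖(w i).2‖) := by
        simpa [List.prod_ofFn] using
          norm_iteratedFDerivAlong_le_of_sorted hg (x, ξ) hsorted [] [] (List.ofFn w) (by simp)
    _ ≤ M * ∏ i, (2 * ‖w i‖) := by
        gcongr with i
        linarith [norm_fst_le (w i), norm_snd_le (w i)]
    _ = 2 ^ n * M * ∏ i, ‖w i‖ := by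
        rw [Finset.prod_mul_distrib, Finset.prod_const, Finset.card_univ, Fintype.card_fin]
        ring

theorem ContDiff.uncurry_comp_add_smul {g : E → G → F} (hg : ContDiff ℝ ∞ (Function.uncurry g))
    (ξ : G) (t : ℝ) : ContDiff ℝ ∞ (Function.uncurry fun y η => g y (ξ + t • η)) :=
  hg.comp (contDiff_fst.prodMk (contDiff_const.add (contDiff_const.smul contDiff_snd)))

theorem mixedFDeriv_comp_add_smul {g : E → G → F} (hg : ContDiff ℝ ∞ (Function.uncurry g))
    (j l : ℕ) (x : E) (ξ : G) (t : ℝ) :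
    mixedFDeriv j l (fun y η => g y (ξ + t • η)) x 0 = t ^ l • mixedFDeriv j l g x ξ := by
  have hinner : (fun x' => iteratedFDeriv ℝ l (fun η => g x' (ξ + t • η)) 0) =
      fun x' => t ^ l • iteratedFDeriv ℝ l (fun ξ' => g x' ξ') ξ := by
    funext x'
    rw [iteratedFDeriv_comp_add_smul (f := fun ξ' => g x' ξ')
      (hg.comp (contDiff_const.prodMk contDiff_id)), smul_zero, add_zero]
  rw [mixedFDeriv, hinner]
  exact iteratedFDeriv_const_smul_apply' (a := t ^ l)
    ((contDiff_iteratedFDeriv_curry_right hg l ξ).contDiffAt.of_le (mod_cast le_top))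

theorem norm_iteratedFDeriv_rescale_le {g : E → G → F} (hg : ContDiff ℝ ∞ (Function.uncurry g))
    (x : E) (ξ : G) {t : ℝ} (ht : 0 < t) {n : ℕ} {M : ℝ}
    (h : ∀ j l, j + l = n → ‖mixedFDeriv j l g x ξ‖ ≤ M / t ^ l) :
    ‖iteratedFDeriv ℝ n (Function.uncurry fun y η => g y (ξ + t • η)) (x, 0)‖ ≤ 2 ^ n * M := by
  refine norm_iteratedFDeriv_le_of_mixedFDeriv (hg.uncurry_comp_add_smul ξ t) x 0
    fun j l hjl => ?_
  rw [mixedFDeriv_comp_add_smul hg]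
  calc ‖t ^ l • mixedFDeriv j l g x ξ‖ ≤ t ^ l * ‖mixedFDeriv j l g x ξ‖ := by
        simpa [abs_of_pos ht] using norm_smul_le (t ^ l) (mixedFDeriv j l g x ξ)
    _ ≤ t ^ l * (M / t ^ l) := by gcongr; exact h j l hjl
    _ = M := by field_simp

end MixedFDeriv

theorem rpow_le_max_mul_rpow {c C u r : ℝ} (hc : 0 < c) (hu : 0 < u) (hcr : c * u ≤ r)
    (hrC : r ≤ C * u) (σ : ℝ) : r ^ σ ≤ max (C ^ σ) (c ^ σ) * u ^ σ := by
  have hr : 0 < r := (mul_pos hc hu).trans_le hcr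
  have hC : 0 ≤ C := (pos_of_mul_pos_left (hr.trans_le hrC) hu.le).le
  rcases le_or_gt 0 σ with hσ | hσ
  · calc r ^ σ ≤ (C * u) ^ σ := Real.rpow_le_rpow hr.le hrC hσ
      _ = C ^ σ * u ^ σ := Real.mul_rpow hC hu.le
      _ ≤ _ := by gcongr; exact le_max_left _ _
  · calc r ^ σ ≤ (c * u) ^ σ := Real.rpow_le_rpow_of_nonpos (mul_pos hc hu) hcr hσ.le
      _ = c ^ σ * u ^ σ := Real.mul_rpow hc.le hu.le
      _ ≤ _ := by gcongr; exact le_max_right _ _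

section ComplexPower

variable {H E G : Type*} [NormedAddCommGroup H] [NormedSpace ℝ H] [NormedAddCommGroup E]
  [NormedSpace ℝ E] [NormedAddCommGroup G] [NormedSpace ℝ G]

theorem contDiffAt_ofReal_cpow_const (s : ℂ) {r : ℝ} (hr : 0 < r) :
    ContDiffAt ℝ ∞ (fun r : ℝ => (r : ℂ) ^ s) r := by
  have h : AnalyticAt ℂ (fun z : ℂ => z ^ s) r :=
    analyticAt_id.cpow analyticAt_const (Complex.ofReal_mem_slitPlane.2 hr)
  exact (h.contDiffAt.restrict_scalars ℝ).comp r Complex.ofRealCLM.contDiff.contDiffAt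

theorem ContDiff.ofReal_cpow_const {B : H → ℝ} (hB : ContDiff ℝ ∞ B) (hpos : ∀ q, 0 < B q)
    (s : ℂ) : ContDiff ℝ ∞ fun q => (B q : ℂ) ^ s :=
  contDiff_iff_contDiffAt.2 fun q => (contDiffAt_ofReal_cpow_const s (hpos q)).comp q hB.contDiffAt

noncomputable def cpowDerivBound (s : ℂ) (n : ℕ) : ℝ :=
  ∑ i ∈ Finset.range (n + 1), ‖iteratedFDerivWithin ℝ i (fun r : ℝ => (r : ℂ) ^ s) (Set.Ioi 0) 1‖

theorem cpowDerivBound_nonneg (s : ℂ) (n : ℕ) : 0 ≤ cpowDerivBound s n :=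
  Finset.sum_nonneg fun _ _ => norm_nonneg _

theorem norm_iteratedFDeriv_ofReal_cpow_le (s : ℂ) {B : H → ℝ} (hB : ContDiff ℝ ∞ B)
    (hpos : ∀ q, 0 < B q) (p : H) {n : ℕ} {D : ℝ}
    (hD : ∀ i, 1 ≤ i → i ≤ n → ‖iteratedFDeriv ℝ i B p‖ ≤ B p * D ^ i) :
    ‖iteratedFDeriv ℝ n (fun q => (B q : ℂ) ^ s) p‖ ≤
      B p ^ s.re * (n ! * cpowDerivBound s n * D ^ n) := by
  set r := B p
  have hr : 0 < r := hpos p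
  set B₁ : H → ℝ := fun q => r⁻¹ • B q
  have hB₁ : ContDiff ℝ ∞ B₁ := contDiff_const.mul hB
  have hB₁pos (q : H) : 0 < B₁ q := mul_pos (inv_pos.2 hr) (hpos q)
  have hhom : (fun q => (B q : ℂ) ^ s) = fun q => (r : ℂ) ^ s • (B₁ q : ℂ) ^ s := by
    funext q
    rw [smul_eq_mul, ← Complex.mul_cpow_ofReal_nonneg hr.le (hB₁pos q).le, ← Complex.ofReal_mul]
    simp [B₁, hr.ne']
  rw [hhom, iteratedFDeriv_const_smul_apply'
      (((hB₁.ofReal_cpow_const hB₁pos s).contDiffAt).of_le (mod_cast le_top)),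
    norm_smul, Complex.norm_cpow_eq_rpow_re_of_pos hr]
  gcongr
  rw [← iteratedFDerivWithin_univ]
  refine norm_iteratedFDerivWithin_comp_le (g := fun r : ℝ => (r : ℂ) ^ s) (t := Set.Ioi 0)
    (fun y hy => (contDiffAt_ofReal_cpow_const s hy).contDiffWithinAt) hB₁.contDiffOn
    (mod_cast le_top) (uniqueDiffOn_Ioi 0) uniqueDiffOn_univ (fun q _ => hB₁pos q)
    (Set.mem_univ p) (fun i hi => ?_) (fun i hi₁ hin => ?_)
  · rw [show B₁ p = 1 from inv_mul_cancel₀ hr.ne']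
    exact Finset.single_le_sum (f := fun i => ‖iteratedFDerivWithin ℝ i
      (fun r : ℝ => (r : ℂ) ^ s) (Set.Ioi 0) 1‖) (fun _ _ => norm_nonneg _)
      (Finset.mem_range.2 (Nat.lt_succ_of_le hi))
  · rw [iteratedFDerivWithin_univ, iteratedFDeriv_const_smul_apply'
      ((hB.contDiffAt).of_le (mod_cast le_top)), norm_smul, Real.norm_of_nonneg (by positivity)]
    calc r⁻¹ * ‖iteratedFDeriv ℝ i B p‖ ≤ r⁻¹ * (r * D ^ i) := by gcongr; exact hD i hi₁ hin
      _ = D ^ i := by field_simp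

theorem norm_mixedFDeriv_ofReal_cpow_le (s : ℂ) {g : E → G → ℝ}
    (hg : ContDiff ℝ ∞ (Function.uncurry g)) (hpos : ∀ x ξ, 0 < g x ξ) (j l : ℕ) (x : E) (ξ : G)
    {t D : ℝ} (ht : 0 < t)
    (hD : ∀ i, 1 ≤ i → i ≤ j + l →
      ‖iteratedFDeriv ℝ i (Function.uncurry fun y η => g y (ξ + t • η)) (x, 0)‖ ≤ g x ξ * D ^ i) :
    ‖mixedFDeriv j l (fun x ξ => (g x ξ : ℂ) ^ s) x ξ‖ ≤
      g x ξ ^ s.re * ((j + l)! * cpowDerivBound s (j + l) * D ^ (j + l)) / t ^ l := by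
  have hgt := hg.uncurry_comp_add_smul ξ t
  have hgt_pos (q : E × G) : 0 < Function.uncurry (fun y η => g y (ξ + t • η)) q := hpos _ _
  have hbase : Function.uncurry (fun y η => g y (ξ + t • η)) (x, 0) = g x ξ := by simp
  have hpow := norm_iteratedFDeriv_ofReal_cpow_le s hgt hgt_pos (x, 0) (hbase ▸ hD)
  rw [hbase] at hpow
  have hscale := mixedFDeriv_comp_add_smul (g := fun x ξ => (g x ξ : ℂ) ^ s)
    (hg.ofReal_cpow_const (fun p => hpos p.1 p.2) s) j l x ξ t
  calc ‖mixedFDeriv j l (fun x ξ => (g x ξ : ℂ) ^ s) x ξ‖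
      = ‖(t ^ l)⁻¹ • mixedFDeriv j l (fun y η => (g y (ξ + t • η) : ℂ) ^ s) x 0‖ := by
        rw [hscale, smul_smul, inv_mul_cancel₀ (by positivity), one_smul]
    _ ≤ (t ^ l)⁻¹ * ‖mixedFDeriv j l (fun y η => (g y (ξ + t • η) : ℂ) ^ s) x 0‖ := by
        simpa [abs_of_pos ht] using norm_smul_le (t ^ l)⁻¹
          (mixedFDeriv j l (fun y η => (g y (ξ + t • η) : ℂ) ^ s) x 0)
    _ ≤ (t ^ l)⁻¹ * ‖iteratedFDeriv ℝ (j + l)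
          (fun q => (Function.uncurry (fun y η => g y (ξ + t • η)) q : ℂ) ^ s) (x, 0)‖ := by
        gcongr
        exact norm_mixedFDeriv_le (hgt.ofReal_cpow_const hgt_pos s) j l x 0
    _ ≤ (t ^ l)⁻¹ * (g x ξ ^ s.re * ((j + l)! * cpowDerivBound s (j + l) * D ^ (j + l))) := by
        gcongr
        exact hpow
    _ = _ := by rw [div_eq_inv_mul]

end ComplexPower

theorem jap_pos {N : ℕ} (ξ : EuclideanSpace ℝ (Fin N)) : 0 < jap ξ :=
  Real.rpow_pos_of_pos (by positivity) _

theorem IsSymbol.exists_bound {d N : ℕ} {m : ℝ} {F : Type*} [NormedAddCommGroup F]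
    [NormedSpace ℝ F] {a : EuclideanSpace ℝ (Fin d) → EuclideanSpace ℝ (Fin N) → F}
    (ha : IsSymbol d N m a) (n : ℕ) :
    ∃ C, ∀ j l, j + l ≤ n → ∀ x ξ, ‖mixedFDeriv j l a x ξ‖ ≤ C * jap ξ ^ (m - l) := by
  choose C hC using ha.2
  refine ⟨∑ j ∈ Finset.range (n + 1), ∑ l ∈ Finset.range (n + 1), |C j l|,
    fun j l hjl x ξ => (hC j l x ξ).trans ?_⟩
  gcongr
  · exact Real.rpow_nonneg (jap_pos ξ).le _
  calc C j l ≤ |C j l| := le_abs_self _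
    _ ≤ ∑ l ∈ Finset.range (n + 1), |C j l| :=
      Finset.single_le_sum (f := fun l => |C j l|) (fun _ _ => abs_nonneg _)
        (Finset.mem_range.2 (by omega))
    _ ≤ _ := Finset.single_le_sum (f := fun j => ∑ l ∈ Finset.range (n + 1), |C j l|)
        (fun _ _ => Finset.sum_nonneg fun _ _ => abs_nonneg _) (Finset.mem_range.2 (by omega))

theorem exists_mul_jap_rpow_le {d N : ℕ} {m μ ε : ℝ} (hm : 0 ≤ m) (hμ : 0 < μ) (hε : 0 < ε)
    {a : EuclideanSpace ℝ (Fin d) → EuclideanSpace ℝ (Fin N) → ℝ} (hlb : ∀ x ξ, ε ≤ a x ξ)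
    (hell : ∀ x ξ, μ ≤ ‖ξ‖ → μ⁻¹ * jap ξ ^ m ≤ a x ξ) :
    ∃ c > 0, ∀ x ξ, c * jap ξ ^ m ≤ a x ξ := by
  set K := ((1 + μ ^ 2) ^ ((1 : ℝ) / 2)) ^ m
  have hK : 0 < K := by positivity
  refine ⟨min μ⁻¹ (ε / K), lt_min (inv_pos.2 hμ) (div_pos hε hK), fun x ξ => ?_⟩
  have hjm : 0 ≤ jap ξ ^ m := Real.rpow_nonneg (jap_pos ξ).le m
  rcases le_or_gt μ ‖ξ‖ with hξ | hξ
  · exact (mul_le_mul_of_nonneg_right (min_le_left _ _) hjm).trans (hell x ξ hξ)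
  · have hjK : jap ξ ^ m ≤ K := by
      unfold jap K
      gcongr
    calc min μ⁻¹ (ε / K) * jap ξ ^ m ≤ ε / K * K := by gcongr; exact min_le_right _ _
      _ = ε := div_mul_cancel₀ ε hK.ne'
      _ ≤ a x ξ := hlb x ξ

theorem IsSymbol.ofReal_cpow {d N : ℕ} {m : ℝ}
    {a : EuclideanSpace ℝ (Fin d) → EuclideanSpace ℝ (Fin N) → ℝ} (ha : IsSymbol d N m a)
    {c : ℝ} (hc : 0 < c) (hca : ∀ x ξ, c * jap ξ ^ m ≤ a x ξ) (s : ℂ) :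
    IsSymbol d N (m * s.re) fun x ξ => (a x ξ : ℂ) ^ s := by
  have hpos (x ξ) : 0 < a x ξ :=
    (mul_pos hc (Real.rpow_pos_of_pos (jap_pos ξ) m)).trans_le (hca x ξ)
  refine ⟨ha.1.ofReal_cpow_const (fun p => hpos p.1 p.2) s, fun j l => ?_⟩
  obtain ⟨C, hC⟩ := ha.exists_bound (j + l)
  set D := 2 * max 1 (C / c)
  refine ⟨max (C ^ s.re) (c ^ s.re) * ((j + l)! * cpowDerivBound s (j + l) * D ^ (j + l)),
    fun x ξ => ?_⟩
  set t := jap ξ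
  have ht : 0 < t := jap_pos ξ
  have htm : 0 < t ^ m := Real.rpow_pos_of_pos ht m
  have hupper : a x ξ ≤ C * t ^ m := by
    have h0 := hC 0 0 (Nat.zero_le _) x ξ
    simp only [mixedFDeriv, norm_iteratedFDeriv_zero, Real.norm_eq_abs, CharP.cast_eq_zero,
      sub_zero] at h0
    exact (le_abs_self _).trans h0
  have hD (i : ℕ) (hi₁ : 1 ≤ i) (hi : i ≤ j + l) :
      ‖iteratedFDeriv ℝ i (Function.uncurry fun y η => a y (ξ + t • η)) (x, 0)‖ ≤
        a x ξ * D ^ i := by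
    have hCD : C / c ≤ max 1 (C / c) ^ i :=
      (le_max_right _ _).trans (le_self_pow₀ (le_max_left _ _) (by omega))
    calc _ ≤ 2 ^ i * (C * t ^ m) :=
          norm_iteratedFDeriv_rescale_le ha.1 x ξ ht fun j' l' h' =>
            (hC j' l' (by omega) x ξ).trans_eq (by rw [Real.rpow_sub ht, Real.rpow_natCast]; ring)
      _ = 2 ^ i * (C / c) * (c * t ^ m) := by field_simp
      _ ≤ 2 ^ i * max 1 (C / c) ^ i * a x ξ := by gcongr; exact hca x ξ
      _ = a x ξ * D ^ i := by rw [mul_pow]; ring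
  calc ‖mixedFDeriv j l (fun x ξ => (a x ξ : ℂ) ^ s) x ξ‖
      ≤ a x ξ ^ s.re * ((j + l)! * cpowDerivBound s (j + l) * D ^ (j + l)) / t ^ l :=
        norm_mixedFDeriv_ofReal_cpow_le s ha.1 hpos j l x ξ ht hD
    _ ≤ max (C ^ s.re) (c ^ s.re) * (t ^ m) ^ s.re *
          ((j + l)! * cpowDerivBound s (j + l) * D ^ (j + l)) / t ^ l := by
        gcongr
        · have := cpowDerivBound_nonneg s (j + l)
          positivity
        exact rpow_le_max_mul_rpow hc htm (hca x ξ) hupper s.re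
    _ = _ := by rw [Real.rpow_sub ht, Real.rpow_natCast, Real.rpow_mul ht.le]; ring

theorem statement2_general (d N : ℕ) (m μ ε : ℝ) (s : ℂ)
    (hm : 0 ≤ m) (hμ : 0 < μ) (hε : 0 < ε)
    (a : EuclideanSpace ℝ (Fin d) → EuclideanSpace ℝ (Fin N) → ℝ)
    (ha : IsSymbol d N m a)
    (hlb : ∀ x ξ, ε ≤ a x ξ)
    (hell : ∀ x ξ, μ ≤ ‖ξ‖ → μ⁻¹ * jap ξ ^ m ≤ a x ξ) :
    IsSymbol d N (m * s.re)
      (fun x ξ => Complex.exp (s * Complex.log ((a x ξ : ℝ) : ℂ))) := by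
  obtain ⟨c, hc, hca⟩ := exists_mul_jap_rpow_le hm hμ hε hlb hell
  have hcpow : (fun x ξ => Complex.exp (s * Complex.log ((a x ξ : ℝ) : ℂ))) =
      fun x ξ => (a x ξ : ℂ) ^ s := by
    funext x ξ
    rw [Complex.cpow_def_of_ne_zero (mod_cast (hε.trans_le (hlb x ξ)).ne'), mul_comm]
  rw [hcpow]
  exact ha.ofReal_cpow hc hca s

/-- If `a` is a real-valued, `μ`-elliptic symbol of type `(1,0)` and order `m ≥ 0`
with `a ≥ ε > 0` everywhere, then the complex power `a^s = exp(s · log a)` is a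
symbol of type `(1,0)` and order `m·Re(s)`. -/
theorem statement2 (d N : ℕ) (hd : 0 < d) (hN : 0 < N) (m μ ε : ℝ) (s : ℂ)
    (hm : 0 ≤ m) (hμ : 0 < μ) (hε : 0 < ε)
    (a : EuclideanSpace ℝ (Fin d) → EuclideanSpace ℝ (Fin N) → ℝ)
    (ha : IsSymbol d N m a)
    (hlb : ∀ x ξ, ε ≤ a x ξ)
    (hell : ∀ x ξ, μ ≤ ‖ξ‖ → μ⁻¹ * jap ξ ^ m ≤ a x ξ) :
    IsSymbol d N (m * s.re)
      (fun x ξ => Complex.exp (s * Complex.log ((a x ξ : ℝ) : ℂ))) :=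
  statement2_general d N m μ ε s hm hμ hε a ha hlb hell
end

section
/- For every k ∈ ℕ and every ε ∈ (0,1] there is a constant C > 0 such that for all t ∈ ℝ with |t| ≥ 1 and all x ∈ ℝ, the k-th derivative of the function g_t : ℝ → ℂ, g_t(x) = (x + i·t)^{-1}, satisfies (1 + x²)^{(1−ε+k)/2}·|g_t^{(k)}(x)| ≤ C·|t|^{−ε}. Moreover, for every k ∈ ℕ there is C' > 0 with (1 + x²)^{(1+k)/2}·|g_t^{(k)}(x)| ≤ C' for all |t| ≥ 1 and all x ∈ ℝ. -/
/-!
Since `x + i t` never vanishes for `t ≠ 0`, the usual formula for the derivatives of `z⁻¹`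
gives `|g_t^{(k)}(x)| = k! (x² + t²)^{-(1+k)/2}` exactly. With `1 + x² ≤ x² + t²` for `|t| ≥ 1`,
the weight `(1 + x²)^{(1-δ+k)/2}` is at most `(x² + t²)^{(1-δ+k)/2}`, leaving
`k! (x² + t²)^{-δ/2} ≤ k! |t|^{-δ}`; take `δ = ε` and `δ = 0`.
-/

open Complex Nat

lemma ofReal_add_ne_zero {c : ℂ} (hc : c.im ≠ 0) (x : ℝ) : (x : ℂ) + c ≠ 0 :=
  fun h => hc (by simpa using congrArg im h)

lemma iteratedDeriv_inv_ofReal_add {c : ℂ} (hc : c.im ≠ 0) (k : ℕ) :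
    iteratedDeriv k (fun y : ℝ => ((y : ℂ) + c)⁻¹) =
      fun x : ℝ => (-1) ^ k * k ! * ((x : ℂ) + c) ^ (-1 - k : ℤ) := by
  induction k with
  | zero => funext x; simp
  | succ n ih =>
    funext x
    have hzpow : HasDerivAt (fun z : ℂ => (z + c) ^ (-1 - n : ℤ))
        ((-1 - n : ℤ) * ((x : ℂ) + c) ^ (-1 - n - 1 : ℤ)) x := by
      simpa using (hasDerivAt_zpow (-1 - n : ℤ) _ (.inl (ofReal_add_ne_zero hc x))).comp_add_const
        (x : ℂ) c
    rw [iteratedDeriv_succ, ih, (hzpow.comp_ofReal.const_mul ((-1) ^ n * (n ! : ℂ))).deriv]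
    push_cast [pow_succ, factorial_succ]
    ring_nf

lemma norm_iteratedDeriv_inv_ofReal_add_mul_I (k : ℕ) {t : ℝ} (ht : t ≠ 0) (x : ℝ) :
    ‖iteratedDeriv k (fun y : ℝ => ((y : ℂ) + t * I)⁻¹) x‖ =
      k ! * (x ^ 2 + t ^ 2) ^ (-(1 + k : ℝ) / 2) := by
  rw [iteratedDeriv_inv_ofReal_add (by simpa using ht), norm_mul, norm_mul, norm_zpow,
    norm_add_mul_I, Real.sqrt_eq_rpow, ← Real.rpow_intCast, ← Real.rpow_mul (by positivity)]
  simp only [norm_pow, norm_neg, norm_one, one_pow, one_mul, norm_natCast]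
  push_cast
  ring_nf

lemma one_add_sq_rpow_mul_norm_iteratedDeriv_inv_le (k : ℕ) {δ : ℝ} (hδ₀ : 0 ≤ δ)
    (hδ : δ ≤ 1 + k) {t : ℝ} (ht : 1 ≤ |t|) (x : ℝ) :
    (1 + x ^ 2) ^ ((1 - δ + k) / 2) * ‖iteratedDeriv k (fun y : ℝ => ((y : ℂ) + t * I)⁻¹) x‖ ≤
      k ! * |t| ^ (-δ) := by
  have ht₀ : t ≠ 0 := abs_pos.mp (one_pos.trans_le ht)
  have ht_sq : 1 ≤ t ^ 2 := by nlinarith [sq_abs t]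
  have hpos : 0 < x ^ 2 + t ^ 2 := by positivity
  rw [norm_iteratedDeriv_inv_ofReal_add_mul_I k ht₀]
  calc (1 + x ^ 2) ^ ((1 - δ + k) / 2) * (k ! * (x ^ 2 + t ^ 2) ^ (-(1 + k : ℝ) / 2))
      ≤ (x ^ 2 + t ^ 2) ^ ((1 - δ + k) / 2) * (k ! * (x ^ 2 + t ^ 2) ^ (-(1 + k : ℝ) / 2)) := by
        gcongr ?_ ^ _ * _
        · linarith
        · linarith
    _ = k ! * (x ^ 2 + t ^ 2) ^ (-δ / 2) := by
        rw [mul_left_comm, ← Real.rpow_add hpos]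
        ring_nf
    _ ≤ k ! * (t ^ 2) ^ (-δ / 2) := by
        gcongr _ * ?_
        exact Real.rpow_le_rpow_of_nonpos (by positivity) (le_add_of_nonneg_left (sq_nonneg x))
          (by linarith)
    _ = k ! * |t| ^ (-δ) := by
        rw [← sq_abs t, ← Real.rpow_natCast, ← Real.rpow_mul (abs_nonneg t)]
        ring_nf

/-- Estimates for the derivatives of `g_t(x) = (x + i t)⁻¹`, `|t| ≥ 1`: for every
`k ∈ ℕ` and `ε ∈ (0,1]` one has `(1+x²)^{(1-ε+k)/2} |g_t^{(k)}(x)| ≤ C |t|^{-ε}`,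
and for every `k` one has `(1+x²)^{(1+k)/2} |g_t^{(k)}(x)| ≤ C'`. -/
theorem statement4 (k : ℕ) :
    (∀ ε : ℝ, 0 < ε → ε ≤ 1 → ∃ C : ℝ, 0 < C ∧ ∀ t x : ℝ, 1 ≤ |t| →
      (1 + x ^ 2) ^ ((1 - ε + k) / 2) *
          ‖iteratedDeriv k (fun y : ℝ => ((y : ℂ) + t * Complex.I)⁻¹) x‖ ≤
        C * |t| ^ (-ε)) ∧
    (∃ C' : ℝ, 0 < C' ∧ ∀ t x : ℝ, 1 ≤ |t| →
      (1 + x ^ 2) ^ (((1 : ℝ) + k) / 2) *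
          ‖iteratedDeriv k (fun y : ℝ => ((y : ℂ) + t * Complex.I)⁻¹) x‖ ≤ C') := by
  have hk : (0 : ℝ) ≤ k := k.cast_nonneg
  refine ⟨fun ε hε₀ hε₁ => ⟨k !, by positivity, fun t x ht => ?_⟩,
    ⟨k !, by positivity, fun t x ht => ?_⟩⟩
  · exact one_add_sq_rpow_mul_norm_iteratedDeriv_inv_le k hε₀.le (by linarith) ht x
  · simpa using one_add_sq_rpow_mul_norm_iteratedDeriv_inv_le k le_rfl (by linarith) ht x
end

section
/- For each k ∈ ℕ, the map F_k from the open half-plane {z ∈ ℂ : Re z < 0} to the Banach space C_b([1,∞), ℂ) of bounded continuous complex-valued functions on [1,∞) with the supremum norm, defined by F_k(z)(x) = x^k·(d/dx)^k(x^z), is well defined (i.e. the indicated function of x is bounded and continuous on [1,∞) whenever Re z < 0) and is holomorphic, i.e. complex differentiable at every point of {Re z < 0}, with derivative F_k'(z)(x) = x^k·(d/dx)^k(x^z·log x). -/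
open Complex Asymptotics Set Polynomial

/-!
By induction on `k`, `x ^ k (d/dx) ^ k x ^ z = p_k(z) x ^ z` and
`x ^ k (d/dx) ^ k (x ^ z log x) = p_k'(z) x ^ z + p_k(z) x ^ z log x`, where
`p_k(z) = z (z - 1) ⋯ (z - k + 1)`. The second expression is the `z`-derivative of the first,
so everything reduces to the holomorphy of `z ↦ x ^ z` as a map into `C_b([1, ∞))`, with
derivative `x ^ z log x`. With `L = log x ≥ 0`, the remainder
`x ^ (z + h) - x ^ z - h x ^ z L = x ^ z (e ^ (h L) - 1 - h L)` has modulus at most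
`|h| ^ 2 L ^ 2 x ^ (re z + |h|)`; for `|h| ≤ -re z / 2` this is at most
`|h| ^ 2 (x ^ (re z / 4) L) ^ 2 ≤ (4 / re z) ^ 2 |h| ^ 2`, uniformly in `x ≥ 1`.
-/

theorem Complex.norm_exp_sub_one_sub_id_le_mul_exp (u : ℂ) :
    ‖exp u - 1 - u‖ ≤ ‖u‖ ^ 2 * Real.exp ‖u‖ := by
  have h := norm_exp_sub_sum_le_exp_norm_sub_sum u 2
  norm_num [Finset.sum_range_succ] at h
  rw [sub_sub]
  refine h.trans ?_
  have hexp : Real.exp ‖u‖ * (1 - ‖u‖ ^ 2) ≤ 1 + ‖u‖ :=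
    calc Real.exp ‖u‖ * (1 - ‖u‖ ^ 2)
        = Real.exp ‖u‖ * (1 + ‖u‖) * (1 - ‖u‖) := by ring
      _ ≤ Real.exp ‖u‖ * (1 + ‖u‖) * Real.exp (-‖u‖) := by
          gcongr; linarith [Real.add_one_le_exp (-‖u‖)]
      _ = 1 + ‖u‖ := by
          rw [mul_right_comm, ← Real.exp_add, add_neg_cancel, Real.exp_zero, one_mul]
  linarith

theorem Real.rpow_mul_log_le_neg_inv {x b : ℝ} (hx : 0 < x) (hb : b < 0) :
    x ^ b * Real.log x ≤ -b⁻¹ :=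
  calc x ^ b * Real.log x ≤ x ^ b * (x ^ (-b) / -b) :=
        mul_le_mul_of_nonneg_left (Real.log_le_rpow_div hx.le (neg_pos.2 hb))
          (Real.rpow_nonneg hx.le _)
    _ = -b⁻¹ := by
        rw [← mul_div_assoc, ← Real.rpow_add hx, add_neg_cancel, Real.rpow_zero, one_div,
          inv_neg]

theorem iteratedDeriv_succ_eqOn_of_hasDerivAt {𝕜 F : Type*} [NontriviallyNormedField 𝕜]
    [NormedAddCommGroup F] [NormedSpace 𝕜 F] {n : ℕ} {f g g' : 𝕜 → F} {s : Set 𝕜}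
    (hs : IsOpen s) (hf : EqOn (iteratedDeriv n f) g s) (hg : ∀ x ∈ s, HasDerivAt g (g' x) x) :
    EqOn (iteratedDeriv (n + 1) f) g' s := fun x hx => by
  rw [iteratedDeriv_succ]
  exact ((hg x hx).congr_of_eventuallyEq (hf.eventuallyEq_of_mem (hs.mem_nhds hx))).deriv

namespace Complex

theorem hasDerivAt_ofReal_cpow_const_of_pos {x : ℝ} (hx : 0 < x) (w : ℂ) :
    HasDerivAt (fun y : ℝ => (y : ℂ) ^ w) (w * (x : ℂ) ^ (w - 1)) x :=
  (hasStrictDerivAt_cpow_const (ofReal_mem_slitPlane.2 hx)).hasDerivAt.comp_ofReal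

theorem hasDerivAt_ofReal_cpow_mul_log {x : ℝ} (hx : 0 < x) (w : ℂ) :
    HasDerivAt (fun y : ℝ => (y : ℂ) ^ w * log y)
      (w * (x : ℂ) ^ (w - 1) * log x + (x : ℂ) ^ (w - 1)) x := by
  have hlog : HasDerivAt (fun y : ℝ => log (y : ℂ)) (x : ℂ)⁻¹ x :=
    (hasStrictDerivAt_log (ofReal_mem_slitPlane.2 hx)).hasDerivAt.comp_ofReal
  refine ((hasDerivAt_ofReal_cpow_const_of_pos hx w).mul hlog).congr_deriv ?_
  rw [cpow_sub _ _ (ofReal_ne_zero.2 hx.ne'), cpow_one, div_eq_mul_inv]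

theorem ofReal_pow_mul_cpow_sub_natCast {x : ℝ} (hx : 0 < x) (z : ℂ) (k : ℕ) :
    (x : ℂ) ^ k * (x : ℂ) ^ (z - k) = (x : ℂ) ^ z := by
  rw [← cpow_natCast, ← cpow_add _ _ (ofReal_ne_zero.2 hx.ne'), add_sub_cancel]

theorem iteratedDeriv_ofReal_cpow (k : ℕ) (z : ℂ) :
    EqOn (iteratedDeriv k fun y : ℝ => (y : ℂ) ^ z)
      (fun x => (descPochhammer ℂ k).eval z * (x : ℂ) ^ (z - k)) (Ioi 0) := by
  induction k with
  | zero => intro x _; simp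
  | succ k ih =>
    refine iteratedDeriv_succ_eqOn_of_hasDerivAt isOpen_Ioi ih fun x hx => ?_
    refine ((hasDerivAt_ofReal_cpow_const_of_pos hx _).const_mul _).congr_deriv ?_
    simp only [descPochhammer_succ_right, eval_mul, eval_sub, eval_X, eval_natCast]
    rw [Nat.cast_succ, ← sub_sub]
    ring

theorem iteratedDeriv_ofReal_cpow_mul_log (k : ℕ) (z : ℂ) :
    EqOn (iteratedDeriv k fun y : ℝ => (y : ℂ) ^ z * log y)
      (fun x => (derivative (descPochhammer ℂ k)).eval z * (x : ℂ) ^ (z - k)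
        + (descPochhammer ℂ k).eval z * ((x : ℂ) ^ (z - k) * log x)) (Ioi 0) := by
  induction k with
  | zero => intro x _; simp
  | succ k ih =>
    refine iteratedDeriv_succ_eqOn_of_hasDerivAt isOpen_Ioi ih fun x hx => ?_
    refine (((hasDerivAt_ofReal_cpow_const_of_pos hx _).const_mul _).add
      ((hasDerivAt_ofReal_cpow_mul_log hx _).const_mul _)).congr_deriv ?_
    simp only [descPochhammer_succ_right, derivative_mul, derivative_sub, derivative_X,
      derivative_natCast, eval_add, eval_mul, eval_sub, eval_X, eval_natCast,
      sub_zero, mul_one]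
    rw [Nat.cast_succ, ← sub_sub]
    ring

theorem norm_ofReal_cpow_le_one {x : ℝ} (hx : 1 ≤ x) {z : ℂ} (hz : z.re ≤ 0) :
    ‖(x : ℂ) ^ z‖ ≤ 1 := by
  rw [norm_cpow_eq_rpow_re_of_pos (one_pos.trans_le hx)]
  exact Real.rpow_le_one_of_one_le_of_nonpos hx hz

theorem norm_ofReal_cpow_mul_log_le {x : ℝ} (hx : 1 ≤ x) {z : ℂ} (hz : z.re < 0) :
    ‖(x : ℂ) ^ z * log x‖ ≤ -z.re⁻¹ := by
  have hx0 : 0 < x := one_pos.trans_le hx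
  rw [norm_mul, norm_cpow_eq_rpow_re_of_pos hx0, ← ofReal_log hx0.le, norm_real,
    Real.norm_of_nonneg (Real.log_nonneg hx)]
  exact Real.rpow_mul_log_le_neg_inv hx0 hz

theorem norm_ofReal_cpow_add_sub_sub_le {x : ℝ} (hx : 1 ≤ x) {z h : ℂ} (hz : z.re < 0)
    (hh : 2 * ‖h‖ ≤ -z.re) :
    ‖(x : ℂ) ^ (z + h) - (x : ℂ) ^ z - h * ((x : ℂ) ^ z * log x)‖
      ≤ (4 / z.re) ^ 2 * ‖h‖ ^ 2 := by
  have hx0 : 0 < x := one_pos.trans_le hx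
  have hxc : (x : ℂ) ≠ 0 := ofReal_ne_zero.2 hx0.ne'
  set L := Real.log x with hL
  have hL0 : 0 ≤ L := Real.log_nonneg hx
  have hlog : log (x : ℂ) = L := (ofReal_log hx0.le).symm
  have hsplit : (x : ℂ) ^ (z + h) - (x : ℂ) ^ z - h * ((x : ℂ) ^ z * log x)
      = (x : ℂ) ^ z * (exp (L * h) - 1 - L * h) := by
    rw [cpow_add _ _ hxc, cpow_def_of_ne_zero hxc h, hlog]; ring
  have hu : ‖(L : ℂ) * h‖ = L * ‖h‖ := by
    rw [norm_mul, norm_real, Real.norm_of_nonneg hL0]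
  have hpow : (x ^ (z.re / 4)) ^ 2 = x ^ (z.re / 2) := by
    rw [← Real.rpow_natCast, ← Real.rpow_mul hx0.le]; ring_nf
  calc ‖(x : ℂ) ^ (z + h) - (x : ℂ) ^ z - h * ((x : ℂ) ^ z * log x)‖
      = x ^ z.re * ‖exp (L * h) - 1 - L * h‖ := by
        rw [hsplit, norm_mul, norm_cpow_eq_rpow_re_of_pos hx0]
    _ ≤ x ^ z.re * ((L * ‖h‖) ^ 2 * x ^ ‖h‖) := by
        gcongr
        rw [Real.rpow_def_of_pos hx0, ← hL, ← hu]
        exact norm_exp_sub_one_sub_id_le_mul_exp _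
    _ = ‖h‖ ^ 2 * (L ^ 2 * x ^ (z.re + ‖h‖)) := by rw [Real.rpow_add hx0]; ring
    _ ≤ ‖h‖ ^ 2 * (L ^ 2 * x ^ (z.re / 2)) := by
        gcongr
        linarith
    _ = ‖h‖ ^ 2 * (x ^ (z.re / 4) * L) ^ 2 := by rw [← hpow]; ring
    _ ≤ ‖h‖ ^ 2 * (-(z.re / 4)⁻¹) ^ 2 := by
        gcongr
        exact Real.rpow_mul_log_le_neg_inv hx0 (by linarith)
    _ = (4 / z.re) ^ 2 * ‖h‖ ^ 2 := by field_simp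

theorem continuous_ofReal_cpow_Ici (z : ℂ) :
    Continuous fun x : Ici (1 : ℝ) => ((x : ℝ) : ℂ) ^ z :=
  (continuous_ofReal.comp continuous_subtype_val).cpow continuous_const fun x =>
    ofReal_mem_slitPlane.2 (one_pos.trans_le x.2)

theorem continuous_ofReal_log_Ici : Continuous fun x : Ici (1 : ℝ) => log ((x : ℝ) : ℂ) :=
  (continuous_ofReal.comp continuous_subtype_val).clog fun x =>
    ofReal_mem_slitPlane.2 (one_pos.trans_le x.2)

-- Both are set to `0` off the half-plane `re z < 0`, where they need not be bounded.
noncomputable def cpowIci (z : ℂ) : BoundedContinuousFunction (Ici (1 : ℝ)) ℂ :=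
  if hz : z.re < 0 then
    .ofNormedAddCommGroup _ (continuous_ofReal_cpow_Ici z) 1 fun x =>
      norm_ofReal_cpow_le_one x.2 hz.le
  else 0

noncomputable def cpowMulLogIci (z : ℂ) : BoundedContinuousFunction (Ici (1 : ℝ)) ℂ :=
  if hz : z.re < 0 then
    .ofNormedAddCommGroup _ ((continuous_ofReal_cpow_Ici z).mul continuous_ofReal_log_Ici)
      (-z.re⁻¹) fun x => norm_ofReal_cpow_mul_log_le x.2 hz
  else 0

theorem cpowIci_apply {z : ℂ} (hz : z.re < 0) (x : Ici (1 : ℝ)) :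
    cpowIci z x = ((x : ℝ) : ℂ) ^ z := by
  simp [cpowIci, hz]

theorem cpowMulLogIci_apply {z : ℂ} (hz : z.re < 0) (x : Ici (1 : ℝ)) :
    cpowMulLogIci z x = ((x : ℝ) : ℂ) ^ z * log (x : ℝ) := by
  simp [cpowMulLogIci, hz]

theorem hasDerivAt_cpowIci {z : ℂ} (hz : z.re < 0) : HasDerivAt cpowIci (cpowMulLogIci z) z := by
  rw [hasDerivAt_iff_isLittleO_nhds_zero]
  refine (IsBigO.of_bound ((4 / z.re) ^ 2) ?_).trans_isLittleO (isLittleO_pow_id one_lt_two)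
  filter_upwards [Metric.closedBall_mem_nhds (0 : ℂ) (half_pos (neg_pos.2 hz))] with h hh
  rw [mem_closedBall_zero_iff] at hh
  have hzh : (z + h).re < 0 := by
    rw [add_re]; linarith [re_le_norm h]
  rw [norm_pow, BoundedContinuousFunction.norm_le (by positivity)]
  intro x
  simp only [BoundedContinuousFunction.coe_sub, BoundedContinuousFunction.coe_smul, Pi.sub_apply,
    smul_eq_mul, cpowIci_apply hzh, cpowIci_apply hz, cpowMulLogIci_apply hz]
  exact norm_ofReal_cpow_add_sub_sub_le x.2 hz (by linarith)

end Complex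

/-- For each `k ∈ ℕ`, the map `F_k(z)(x) = x^k (d/dx)^k (x^z)` is a well-defined map
from `{Re z < 0}` to the Banach space `C_b([1,∞), ℂ)` of bounded continuous functions,
and it is holomorphic there with derivative `F_k'(z)(x) = x^k (d/dx)^k (x^z log x)`. -/
theorem statement6 (k : ℕ) :
    ∃ F G : ℂ → BoundedContinuousFunction (Set.Ici (1 : ℝ)) ℂ,
      (∀ z : ℂ, z.re < 0 → ∀ x : Set.Ici (1 : ℝ),
        F z x = ((x : ℝ) : ℂ) ^ k *
          iteratedDeriv k (fun y : ℝ => ((y : ℂ) ^ z)) (x : ℝ)) ∧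
      (∀ z : ℂ, z.re < 0 → ∀ x : Set.Ici (1 : ℝ),
        G z x = ((x : ℝ) : ℂ) ^ k *
          iteratedDeriv k (fun y : ℝ => ((y : ℂ) ^ z * Complex.log (y : ℂ))) (x : ℝ)) ∧
      (∀ z : ℂ, z.re < 0 → HasDerivAt F (G z) z) := by
  set P := descPochhammer ℂ k
  refine ⟨fun z => P.eval z • cpowIci z,
    fun z => (derivative P).eval z • cpowIci z + P.eval z • cpowMulLogIci z,
    fun z hz x => ?_, fun z hz x => ?_,
    fun z hz => ((P.hasDerivAt z).smul (hasDerivAt_cpowIci hz)).congr_deriv (add_comm _ _)⟩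
  all_goals
    have hx : (0 : ℝ) < x := one_pos.trans_le x.2
    simp only [BoundedContinuousFunction.coe_add, BoundedContinuousFunction.coe_smul,
      Pi.add_apply, smul_eq_mul, cpowIci_apply hz, cpowMulLogIci_apply hz]
  · rw [iteratedDeriv_ofReal_cpow k z hx, ← ofReal_pow_mul_cpow_sub_natCast hx z k]
    ring
  · rw [iteratedDeriv_ofReal_cpow_mul_log k z hx, ← ofReal_pow_mul_cpow_sub_natCast hx z k]
    ring
end

section
/- For every polynomial P ∈ ℂ[X], every ε > 0 and every R > 0, there is a constant C > 0 such that for all z, w ∈ ℂ with Re z ≤ −2ε, |z| ≤ R and |w| ≤ ε, and all real x ≥ 1, one has |P(z+w)·x^{z+w} − P(z)·x^z − w·(P'(z) + P(z)·log x)·x^z| ≤ C·|w|²·x^{−ε}·(1 + log x)². -/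
/-!
With `f u = P(u) x^u`, differentiation in `u` maps `Q(u) x^u` to `(Q' + Q log x)(u) x^u`, so
`f'' = (P'' + 2 P' log x + P log² x) x^u`. On the convex region `|u| ≤ R + ε`, `Re u ≤ -ε`, which
contains `z` and `z + w`, this gives `|f''| ≤ M (1 + log x)² x^{-ε}`, where `M` bounds `P`, `P'`,
`P''` on the closed disc of radius `R + ε`. The estimate is then the second-order mean value
inequality for `f` on the segment `[z, z + w]`.
-/

open Polynomial Metric Set

section Taylor

variable {𝕜 E : Type*} [RCLike 𝕜] [NormedAddCommGroup E] [NormedSpace 𝕜 E]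

theorem Convex.norm_image_sub_sub_smul_deriv_le {f f' f'' : 𝕜 → E} {s : Set 𝕜} {K : ℝ} {x y : 𝕜}
    (hs : Convex ℝ s) (hf : ∀ u ∈ s, HasDerivWithinAt f (f' u) s u)
    (hf' : ∀ u ∈ s, HasDerivWithinAt f' (f'' u) s u) (bound : ∀ u ∈ s, ‖f'' u‖ ≤ K)
    (hx : x ∈ s) (hy : y ∈ s) :
    ‖f y - f x - (y - x) • f' x‖ ≤ K * ‖y - x‖ ^ 2 := by
  have hK : 0 ≤ K := (norm_nonneg _).trans (bound x hx)
  have hseg : segment ℝ x y ⊆ s := hs.segment_subset hx hy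
  have hf'_lip : ∀ u ∈ segment ℝ x y, ‖f' u - f' x‖ ≤ K * ‖y - x‖ := fun u hu =>
    (hs.norm_image_sub_le_of_norm_hasDerivWithin_le hf' bound hx (hseg hu)).trans
      (mul_le_mul_of_nonneg_left (norm_sub_le_of_mem_segment hu) hK)
  have hg : ∀ u ∈ segment ℝ x y, HasDerivWithinAt (fun v => f v - (v - x) • f' x)
      (f' u - f' x) (segment ℝ x y) u := fun u hu => by
    simpa using ((hf u (hseg hu)).mono hseg).fun_sub
      (((hasDerivAt_id u).sub_const x).smul_const (f' x)).hasDerivWithinAt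
  have := (convex_segment x y).norm_image_sub_le_of_norm_hasDerivWithin_le hg hf'_lip
    (left_mem_segment ℝ x y) (right_mem_segment ℝ x y)
  rwa [sub_self, zero_smul, sub_zero, sub_right_comm, mul_assoc, ← sq] at this

end Taylor

namespace Polynomial

noncomputable def twistDeriv (L : ℂ) (P : ℂ[X]) : ℂ[X] := derivative P + P * C L

theorem hasDerivAt_eval_mul_cpow {c : ℂ} (hc : c ≠ 0) (P : ℂ[X]) (u : ℂ) :
    HasDerivAt (fun v => P.eval v * c ^ v) ((P.twistDeriv (Complex.log c)).eval u * c ^ u) u := by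
  refine ((P.hasDerivAt u).fun_mul
    (Complex.hasStrictDerivAt_const_cpow (Or.inl hc)).hasDerivAt).congr_deriv ?_
  simp only [twistDeriv, eval_add, eval_mul, eval_C]
  ring

theorem norm_eval_twistDeriv_twistDeriv_le (P : ℂ[X]) (L u : ℂ) :
    ‖((P.twistDeriv L).twistDeriv L).eval u‖ ≤
      (‖P.eval u‖ + ‖(derivative P).eval u‖ + ‖(derivative (derivative P)).eval u‖) *
        (1 + ‖L‖) ^ 2 := by
  set a := P.eval u
  set b := (derivative P).eval u
  set d := (derivative (derivative P)).eval u
  have heval : ((P.twistDeriv L).twistDeriv L).eval u = d + 2 * b * L + a * L ^ 2 := by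
    simp only [twistDeriv, derivative_add, derivative_mul, derivative_C, eval_add, eval_mul,
      eval_C, mul_zero, add_zero, a, b, d]
    ring
  have ha := norm_nonneg a
  have hb := norm_nonneg b
  have hd := norm_nonneg d
  have hL := norm_nonneg L
  calc ‖((P.twistDeriv L).twistDeriv L).eval u‖ ≤ ‖d‖ + 2 * ‖b‖ * ‖L‖ + ‖a‖ * ‖L‖ ^ 2 := by
        rw [heval]
        refine norm_add₃_le.trans ?_
        simp [norm_pow]
    _ ≤ (‖a‖ + ‖b‖ + ‖d‖) * (1 + ‖L‖) ^ 2 := by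
        nlinarith [mul_nonneg ha hL, mul_nonneg hb hL, mul_nonneg hd hL,
          mul_nonneg (mul_nonneg hb hL) hL, mul_nonneg (mul_nonneg hd hL) hL]

end Polynomial

/-- Second-order Taylor estimate in `w` for `P(z+w)·x^{z+w}`: for every polynomial `P`,
`ε > 0` and `R > 0` there is `C > 0` such that for `Re z ≤ -2ε`, `|z| ≤ R`, `|w| ≤ ε`
and real `x ≥ 1`,
`|P(z+w) x^{z+w} − P(z) x^z − w (P'(z) + P(z) log x) x^z| ≤ C |w|² x^{-ε} (1 + log x)²`. -/
theorem statement7 (P : Polynomial ℂ) (ε R : ℝ) (hε : 0 < ε) (hR : 0 < R) :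
    ∃ C : ℝ, 0 < C ∧ ∀ (z w : ℂ) (x : ℝ), z.re ≤ -2 * ε → ‖z‖ ≤ R → ‖w‖ ≤ ε → 1 ≤ x →
      ‖P.eval (z + w) * (x : ℂ) ^ (z + w) - P.eval z * (x : ℂ) ^ z -
          w * ((P.derivative.eval z) + P.eval z * Complex.log (x : ℂ)) * (x : ℂ) ^ z‖ ≤
        C * ‖w‖ ^ 2 * x ^ (-ε) * (1 + Real.log x) ^ 2 := by
  obtain ⟨M, hM⟩ := (isCompact_closedBall (0 : ℂ) (R + ε)).exists_bound_of_continuousOn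
    (f := fun u => ‖P.eval u‖ + ‖(derivative P).eval u‖ + ‖(derivative (derivative P)).eval u‖)
    (by fun_prop)
  have hM0 : 0 ≤ M := (norm_nonneg _).trans (hM 0 (mem_closedBall_self (by positivity)))
  refine ⟨M + 1, by positivity, fun z w x hz hzR hw hx => ?_⟩
  have hx0 : (x : ℂ) ≠ 0 := by exact_mod_cast (zero_lt_one.trans_le hx).ne'
  have hL : ‖Complex.log x‖ = Real.log x := by
    rw [← Complex.ofReal_log (by positivity), Complex.norm_real,
      Real.norm_of_nonneg (Real.log_nonneg hx)]
  set s : Set ℂ := closedBall 0 (R + ε) ∩ {u | u.re ≤ -ε}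
  have hsecond : ∀ u ∈ s, ‖((P.twistDeriv (Complex.log x)).twistDeriv (Complex.log x)).eval u *
      (x : ℂ) ^ u‖ ≤ M * (1 + Real.log x) ^ 2 * x ^ (-ε) := by
    rintro u ⟨hu_ball, hu_re⟩
    rw [norm_mul, Complex.norm_cpow_eq_rpow_re_of_pos (by positivity), ← hL]
    gcongr
    · exact (norm_eval_twistDeriv_twistDeriv_le _ _ _).trans
        (mul_le_mul_of_nonneg_right ((le_abs_self _).trans (hM u hu_ball)) (by positivity))
    · exact hu_re
  have hzs : z ∈ s :=
    ⟨mem_closedBall_zero_iff.2 (by linarith), show z.re ≤ -ε by linarith⟩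
  have hzws : z + w ∈ s :=
    ⟨mem_closedBall_zero_iff.2 ((norm_add_le z w).trans (by linarith)),
      show (z + w).re ≤ -ε by linarith [Complex.add_re z w, Complex.re_le_norm w]⟩
  have htaylor := ((convex_closedBall _ _).inter
    (convex_halfSpace_re_le _)).norm_image_sub_sub_smul_deriv_le
      (fun u _ => (P.hasDerivAt_eval_mul_cpow hx0 u).hasDerivWithinAt)
      (fun u _ => ((P.twistDeriv _).hasDerivAt_eval_mul_cpow hx0 u).hasDerivWithinAt)
      hsecond hzs hzws
  simp only [add_sub_cancel_left, smul_eq_mul, twistDeriv, eval_add, eval_mul, eval_C,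
    ← mul_assoc] at htaylor
  refine htaylor.trans ?_
  nlinarith [show 0 ≤ x ^ (-ε) * (1 + Real.log x) ^ 2 * ‖w‖ ^ 2 by positivity]
end

section
/- Let B be a unital complex Banach algebra and let J ⊆ B be a semi-ideal, i.e. a linear subspace such that x·b·y ∈ J for all x, y ∈ J and all b ∈ B. Let x ∈ J and let (a_n)_{n≥1} be a sequence of complex numbers such that the series Σ_{n≥1} |a_n|·‖x‖^n converges. Then the element Σ_{n≥1} a_n·x^n (the sum of the norm-convergent series in B) belongs to J. In other words, a semi-ideal is closed under the functional calculus f ↦ f(x) for functions f given by a power series converging on a disc of radius greater than ‖x‖ with f(0) = 0. -/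
/-!
Writing `y = Σ_{n≥0} a_{n+2} xⁿ`, the series factors as `a₁ x + x y x`. The first term lies in
`J` because `J` is a subspace, the second because `J` is a semi-ideal. The series for `y`
converges absolutely: for `x ≠ 0` its terms are dominated by `|a_{n+2}| ‖x‖^{n+2} / ‖x‖²`.
-/

section PowerSeries

variable {𝕜 B : Type*}

theorem tsum_smul_pow_succ_eq_smul_add_mul_mul [CommSemiring 𝕜] [Semiring B] [Algebra 𝕜 B]
    [TopologicalSpace B] [IsTopologicalSemiring B] [T2Space B] (a : ℕ → 𝕜) (x : B)
    (hy : Summable fun n : ℕ => a (n + 2) • x ^ n) :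
    ∑' n : ℕ, a (n + 1) • x ^ (n + 1) = a 1 • x + x * (∑' n : ℕ, a (n + 2) • x ^ n) * x := by
  have hx_terms : ∀ n : ℕ, x * (a (n + 2) • x ^ n) * x = a (n + 2) • x ^ (n + 2) := fun n => by
    rw [mul_smul_comm, smul_mul_assoc, ← pow_succ', ← pow_succ]
  rw [tsum_eq_zero_add' (f := fun n => a (n + 1) • x ^ (n + 1))
      (((hy.mul_left x).mul_right x).congr hx_terms),
    ← hy.tsum_mul_left x, ← (hy.mul_left x).tsum_mul_right x, zero_add, pow_one]
  exact congrArg _ (tsum_congr fun n => (hx_terms n).symm)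

variable [NormedField 𝕜] [NormedRing B] [NormedAlgebra 𝕜 B] [CompleteSpace B]

theorem summable_smul_pow_of_summable_norm_mul_pow {c : ℕ → 𝕜} {x : B}
    (h : Summable fun n : ℕ => ‖c n‖ * ‖x‖ ^ n) : Summable fun n : ℕ => c n • x ^ n := by
  refine h.of_norm_bounded_eventually ?_
  filter_upwards [Set.Finite.compl_mem_cofinite (Set.finite_singleton 0)] with n hn
  calc ‖c n • x ^ n‖ ≤ ‖c n‖ * ‖x ^ n‖ := norm_smul_le _ _
    _ ≤ ‖c n‖ * ‖x‖ ^ n := by gcongr; exact norm_pow_le' x (Nat.pos_of_ne_zero hn)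

theorem summable_smul_pow_of_summable_norm_mul_pow_add {c : ℕ → 𝕜} {x : B} (hx : x ≠ 0)
    (k : ℕ) (h : Summable fun n : ℕ => ‖c n‖ * ‖x‖ ^ (n + k)) :
    Summable fun n : ℕ => c n • x ^ n := by
  have hxk : ‖x‖ ^ k ≠ 0 := pow_ne_zero _ (norm_ne_zero_iff.mpr hx)
  refine summable_smul_pow_of_summable_norm_mul_pow ?_
  refine (h.div_const (‖x‖ ^ k)).congr fun n => ?_
  rw [pow_add, ← mul_assoc, mul_div_cancel_right₀ _ hxk]

end PowerSeries

/-- A semi-ideal `J` of a unital complex Banach algebra `B` (a linear subspace with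
`x·b·y ∈ J` for `x, y ∈ J`, `b ∈ B`) is closed under the functional calculus by power
series vanishing at `0`: if `x ∈ J` and `Σ_{n≥1} |a_n| ‖x‖^n < ∞`, then
`Σ_{n≥1} a_n x^n ∈ J`. -/
theorem statement8 {B : Type*} [NormedRing B] [NormedAlgebra ℂ B] [CompleteSpace B]
    (J : Submodule ℂ B)
    (hJ : ∀ x ∈ J, ∀ y ∈ J, ∀ b : B, x * b * y ∈ J)
    (x : B) (hx : x ∈ J) (a : ℕ → ℂ)
    (hsum : Summable fun n : ℕ => ‖a (n + 1)‖ * ‖x‖ ^ (n + 1)) :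
    (∑' n : ℕ, a (n + 1) • x ^ (n + 1)) ∈ J := by
  rcases eq_or_ne x 0 with rfl | hx0
  · simp only [zero_pow (Nat.succ_ne_zero _), smul_zero, tsum_zero]
    exact J.zero_mem
  have hy : Summable fun n : ℕ => a (n + 2) • x ^ n :=
    summable_smul_pow_of_summable_norm_mul_pow_add hx0 2 ((summable_nat_add_iff 1).mpr hsum)
  rw [tsum_smul_pow_succ_eq_smul_add_mul_mul a x hy]
  exact J.add_mem (J.smul_mem _ hx) (hJ x hx x hx _)
end

section
/- For every k ∈ ℕ, the set J_k is a subalgebra of 𝔄: it is a linear subspace, and if A, B ∈ J_k then A·B ∈ J_k with p_k(A·B) ≤ p_k(A)·p_k(B); moreover p_k is a norm on J_k satisfying p_k(A) ≥ ‖A‖ for all A ∈ J_k. (In particular, for A, B ∈ J_1 one has ω^ℓ(AB) = ω^ℓ(A)·B, ω^r(AB) = A·ω^r(B) and ω^{ℓ,r}(AB) = ω^ℓ(A)·ω^r(B).) -/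
/-!
Each of `ω^ℓ`, `ω^r`, `ω^{ℓ,r}` is the function whose graph is a submodule of `B(H) × B(H)`
(`leftGraph`, `rightGraph`, `leftRightGraph`); these submodules are graphs of functions because
`T` is single-valued and `D(T)` is dense. Hence the three operations are linear on their common
domain, and the graphs are stable under the products giving the Leibniz-type rules
`ω^ℓ(AB) = ω^ℓ(A) B`, `ω^r(AB) = A ω^r(B)`, `ω^{ℓ,r}(AB) = ω^ℓ(A) ω^r(B)`. Everything else is
induction on `k`; submultiplicativity comes from
`p_{k+1}(AB) ≤ (p_k(A) + p_k(ω^ℓ A)) (p_k(B) + p_k(ω^r B)) ≤ p_{k+1}(A) p_{k+1}(B)`.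
-/

open ContinuousLinearMap
open scoped Classical

variable {H : Type*} [NormedAddCommGroup H] [InnerProductSpace ℂ H] [CompleteSpace H]

/-- `ω^ℓ(A) := T ∘ A`, as a bounded operator, when `A(H) ⊆ D(T)` and `T ∘ A` is
bounded; junk value `0` otherwise. -/
noncomputable def omegaL (T : H →ₗ.[ℂ] H) (A : H →L[ℂ] H) : H →L[ℂ] H :=
  if h : ∃ L : H →L[ℂ] H, ∀ f : H, (A f, L f) ∈ T.graph then h.choose else 0

/-- `ω^r(A)`: the bounded extension of `f ↦ A (T f)`, when it exists;
junk value `0` otherwise. -/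
noncomputable def omegaR (T : H →ₗ.[ℂ] H) (A : H →L[ℂ] H) : H →L[ℂ] H :=
  if h : ∃ R : H →L[ℂ] H, ∀ f : T.domain, R ↑f = A (T f) then h.choose else 0

/-- `ω^{ℓ,r}(A)`: the bounded extension of `f ↦ T (A (T f))`, when it exists;
junk value `0` otherwise. -/
noncomputable def omegaLR (T : H →ₗ.[ℂ] H) (A : H →L[ℂ] H) : H →L[ℂ] H :=
  if h : ∃ S : H →L[ℂ] H, ∀ f : T.domain, (A (T f), S ↑f) ∈ T.graph then h.choose else 0

/-- The scale of semi-ideals `J_k = J_k(T)` inside `𝔄`: `J_0 = 𝔄` and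
`A ∈ J_{k+1}` iff `A ∈ J_k`, the operators `ω^ℓ(A), ω^r(A), ω^{ℓ,r}(A)` exist
(as bounded operators) and belong to `J_k`. -/
def Jset (T : H →ₗ.[ℂ] H) (𝔄 : Set (H →L[ℂ] H)) : ℕ → Set (H →L[ℂ] H)
  | 0 => 𝔄
  | (k + 1) =>
    { A | A ∈ Jset T 𝔄 k ∧
      (∃ L : H →L[ℂ] H, ∀ f : H, (A f, L f) ∈ T.graph) ∧
      (∃ R : H →L[ℂ] H, ∀ f : T.domain, R ↑f = A (T f)) ∧
      (∃ S : H →L[ℂ] H, ∀ f : T.domain, (A (T f), S ↑f) ∈ T.graph) ∧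
      omegaL T A ∈ Jset T 𝔄 k ∧ omegaR T A ∈ Jset T 𝔄 k ∧ omegaLR T A ∈ Jset T 𝔄 k }

/-- The norms `p_k`: `p_0(A) = ‖A‖` and
`p_{k+1}(A) = p_k(A) + p_k(ω^ℓ(A)) + p_k(ω^r(A)) + p_k(ω^{ℓ,r}(A))`. -/
noncomputable def pnorm (T : H →ₗ.[ℂ] H) : ℕ → (H →L[ℂ] H) → ℝ
  | 0, A => ‖A‖
  | (k + 1), A =>
      pnorm T k A + pnorm T k (omegaL T A) + pnorm T k (omegaR T A) +
        pnorm T k (omegaLR T A)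

set_option linter.unusedSectionVars false

section GraphFun

variable {R M N : Type*} [Ring R] [AddCommGroup M] [Module R M] [AddCommGroup N] [Module R N]
  {G : Submodule R (M × N)} {x y : M} {z : N}

variable (G) in
def graphDomain : Submodule R M := G.map (LinearMap.fst R M N)

theorem mem_graphDomain : x ∈ graphDomain G ↔ ∃ z, (x, z) ∈ G := by
  simp [graphDomain]

noncomputable def graphFun (G : Submodule R (M × N)) (x : M) : N :=
  if h : ∃ z, (x, z) ∈ G then h.choose else 0

theorem graphFun_mem (hx : x ∈ graphDomain G) : (x, graphFun G x) ∈ G := by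
  rw [mem_graphDomain] at hx
  rw [graphFun, dif_pos hx]
  exact hx.choose_spec

theorem graphFun_eq_of_mem (hG : ∀ p ∈ G, p.1 = 0 → p.2 = 0) (h : (x, z) ∈ G) :
    graphFun G x = z := by
  have hsub : (0, graphFun G x - z) ∈ G := by
    simpa using sub_mem (graphFun_mem (mem_graphDomain.mpr ⟨z, h⟩)) h
  exact sub_eq_zero.mp (hG _ hsub rfl)

end GraphFun

section Omegas

variable {T : H →ₗ.[ℂ] H} {A B L R S : H →L[ℂ] H}

variable (T) in
def leftGraph : Submodule ℂ ((H →L[ℂ] H) × (H →L[ℂ] H)) where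
  carrier := {p | ∀ f, (p.1 f, p.2 f) ∈ T.graph}
  add_mem' hp hq f := T.graph.add_mem (hp f) (hq f)
  zero_mem' _ := T.graph.zero_mem
  smul_mem' c _ hp f := T.graph.smul_mem c (hp f)

variable (T) in
def rightGraph : Submodule ℂ ((H →L[ℂ] H) × (H →L[ℂ] H)) where
  carrier := {p | ∀ f : T.domain, p.2 f = p.1 (T f)}
  add_mem' hp hq f := by simp [hp f, hq f]
  zero_mem' _ := rfl
  smul_mem' c _ hp f := by simp [hp f]

variable (T) in
def leftRightGraph : Submodule ℂ ((H →L[ℂ] H) × (H →L[ℂ] H)) where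
  carrier := {p | ∀ f : T.domain, (p.1 (T f), p.2 f) ∈ T.graph}
  add_mem' hp hq f := T.graph.add_mem (hp f) (hq f)
  zero_mem' _ := T.graph.zero_mem
  smul_mem' c _ hp f := T.graph.smul_mem c (hp f)

theorem omegaL_eq_graphFun : omegaL T A = graphFun (leftGraph T) A := rfl

theorem omegaR_eq_graphFun : omegaR T A = graphFun (rightGraph T) A := rfl

theorem omegaLR_eq_graphFun : omegaLR T A = graphFun (leftRightGraph T) A := rfl

theorem leftGraph_functional : ∀ p ∈ leftGraph T, p.1 = 0 → p.2 = 0 := by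
  rintro ⟨A, L⟩ h (rfl : A = 0)
  ext f
  exact T.graph_fst_eq_zero_snd (h f) rfl

theorem rightGraph_functional (hdense : Dense (T.domain : Set H)) :
    ∀ p ∈ rightGraph T, p.1 = 0 → p.2 = 0 := by
  rintro ⟨A, R⟩ h (rfl : A = 0)
  refine ContinuousLinearMap.ext_on (s := T.domain) (by simpa using hdense) fun f hf => ?_
  simpa using h ⟨f, hf⟩

theorem leftRightGraph_functional (hdense : Dense (T.domain : Set H)) :
    ∀ p ∈ leftRightGraph T, p.1 = 0 → p.2 = 0 := by
  rintro ⟨A, S⟩ h (rfl : A = 0)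
  refine ContinuousLinearMap.ext_on (s := T.domain) (by simpa using hdense) fun f hf => ?_
  exact T.graph_fst_eq_zero_snd (h ⟨f, hf⟩) rfl

theorem mul_mem_leftGraph (h : (A, L) ∈ leftGraph T) (B : H →L[ℂ] H) :
    (A * B, L * B) ∈ leftGraph T :=
  fun f => h (B f)

theorem mul_mem_rightGraph (A : H →L[ℂ] H) (h : (B, R) ∈ rightGraph T) :
    (A * B, A * R) ∈ rightGraph T :=
  fun f => congrArg A (h f)

theorem mul_mem_leftRightGraph (hA : (A, L) ∈ leftGraph T) (hB : (B, R) ∈ rightGraph T) :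
    (A * B, L * R) ∈ leftRightGraph T := fun f => by
  simpa [hB f] using hA (R f)

def HasOmegas (T : H →ₗ.[ℂ] H) (A : H →L[ℂ] H) : Prop :=
  A ∈ graphDomain (leftGraph T) ∧ A ∈ graphDomain (rightGraph T) ∧
    A ∈ graphDomain (leftRightGraph T)

theorem HasOmegas.add (hA : HasOmegas T A) (hB : HasOmegas T B) : HasOmegas T (A + B) :=
  ⟨add_mem hA.1 hB.1, add_mem hA.2.1 hB.2.1, add_mem hA.2.2 hB.2.2⟩

theorem HasOmegas.smul (hA : HasOmegas T A) (c : ℂ) : HasOmegas T (c • A) :=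
  ⟨Submodule.smul_mem _ c hA.1, Submodule.smul_mem _ c hA.2.1, Submodule.smul_mem _ c hA.2.2⟩

theorem HasOmegas.mem_leftGraph (hA : HasOmegas T A) : (A, omegaL T A) ∈ leftGraph T :=
  graphFun_mem hA.1

theorem HasOmegas.mem_rightGraph (hA : HasOmegas T A) : (A, omegaR T A) ∈ rightGraph T :=
  graphFun_mem hA.2.1

theorem HasOmegas.mem_leftRightGraph (hA : HasOmegas T A) :
    (A, omegaLR T A) ∈ leftRightGraph T :=
  graphFun_mem hA.2.2

theorem HasOmegas.mul (hA : HasOmegas T A) (hB : HasOmegas T B) : HasOmegas T (A * B) :=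
  ⟨mem_graphDomain.mpr ⟨_, mul_mem_leftGraph hA.mem_leftGraph B⟩,
    mem_graphDomain.mpr ⟨_, mul_mem_rightGraph A hB.mem_rightGraph⟩,
    mem_graphDomain.mpr ⟨_, mul_mem_leftRightGraph hA.mem_leftGraph hB.mem_rightGraph⟩⟩

theorem omegaL_eq_of_mem (h : (A, L) ∈ leftGraph T) : omegaL T A = L :=
  omegaL_eq_graphFun.trans (graphFun_eq_of_mem leftGraph_functional h)

theorem omegaR_eq_of_mem (hdense : Dense (T.domain : Set H)) (h : (A, R) ∈ rightGraph T) :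
    omegaR T A = R :=
  omegaR_eq_graphFun.trans (graphFun_eq_of_mem (rightGraph_functional hdense) h)

theorem omegaLR_eq_of_mem (hdense : Dense (T.domain : Set H)) (h : (A, S) ∈ leftRightGraph T) :
    omegaLR T A = S :=
  omegaLR_eq_graphFun.trans (graphFun_eq_of_mem (leftRightGraph_functional hdense) h)

theorem omegaL_add (hA : HasOmegas T A) (hB : HasOmegas T B) :
    omegaL T (A + B) = omegaL T A + omegaL T B :=
  omegaL_eq_of_mem (add_mem hA.mem_leftGraph hB.mem_leftGraph)

theorem omegaR_add (hdense : Dense (T.domain : Set H)) (hA : HasOmegas T A) (hB : HasOmegas T B) :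
    omegaR T (A + B) = omegaR T A + omegaR T B :=
  omegaR_eq_of_mem hdense (add_mem hA.mem_rightGraph hB.mem_rightGraph)

theorem omegaLR_add (hdense : Dense (T.domain : Set H)) (hA : HasOmegas T A)
    (hB : HasOmegas T B) : omegaLR T (A + B) = omegaLR T A + omegaLR T B :=
  omegaLR_eq_of_mem hdense (add_mem hA.mem_leftRightGraph hB.mem_leftRightGraph)

theorem omegaL_smul (hA : HasOmegas T A) (c : ℂ) : omegaL T (c • A) = c • omegaL T A :=
  omegaL_eq_of_mem (Submodule.smul_mem _ c hA.mem_leftGraph)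

theorem omegaR_smul (hdense : Dense (T.domain : Set H)) (hA : HasOmegas T A) (c : ℂ) :
    omegaR T (c • A) = c • omegaR T A :=
  omegaR_eq_of_mem hdense (Submodule.smul_mem _ c hA.mem_rightGraph)

theorem omegaLR_smul (hdense : Dense (T.domain : Set H)) (hA : HasOmegas T A) (c : ℂ) :
    omegaLR T (c • A) = c • omegaLR T A :=
  omegaLR_eq_of_mem hdense (Submodule.smul_mem _ c hA.mem_leftRightGraph)

theorem omegaL_mul (hA : HasOmegas T A) (B : H →L[ℂ] H) : omegaL T (A * B) = omegaL T A * B :=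
  omegaL_eq_of_mem (mul_mem_leftGraph hA.mem_leftGraph B)

theorem omegaR_mul (hdense : Dense (T.domain : Set H)) (A : H →L[ℂ] H) (hB : HasOmegas T B) :
    omegaR T (A * B) = A * omegaR T B :=
  omegaR_eq_of_mem hdense (mul_mem_rightGraph A hB.mem_rightGraph)

theorem omegaLR_mul (hdense : Dense (T.domain : Set H)) (hA : HasOmegas T A)
    (hB : HasOmegas T B) : omegaLR T (A * B) = omegaL T A * omegaR T B :=
  omegaLR_eq_of_mem hdense (mul_mem_leftRightGraph hA.mem_leftGraph hB.mem_rightGraph)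

end Omegas

section Scale

variable {T : H →ₗ.[ℂ] H} {A B : H →L[ℂ] H} {k : ℕ}

theorem mem_Jset_succ {𝔄 : Set (H →L[ℂ] H)} :
    A ∈ Jset T 𝔄 (k + 1) ↔ A ∈ Jset T 𝔄 k ∧ HasOmegas T A ∧ omegaL T A ∈ Jset T 𝔄 k ∧
      omegaR T A ∈ Jset T 𝔄 k ∧ omegaLR T A ∈ Jset T 𝔄 k := by
  simp only [HasOmegas, mem_graphDomain]
  exact ⟨fun ⟨h, hl, hr, hlr, h'⟩ => ⟨h, ⟨hl, hr, hlr⟩, h'⟩,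
    fun ⟨h, ⟨hl, hr, hlr⟩, h'⟩ => ⟨h, hl, hr, hlr, h'⟩⟩

theorem pnorm_succ (T : H →ₗ.[ℂ] H) (k : ℕ) (A : H →L[ℂ] H) :
    pnorm T (k + 1) A = pnorm T k A + pnorm T k (omegaL T A) + pnorm T k (omegaR T A) +
      pnorm T k (omegaLR T A) :=
  rfl

theorem pnorm_nonneg (T : H →ₗ.[ℂ] H) (k : ℕ) (A : H →L[ℂ] H) : 0 ≤ pnorm T k A := by
  induction k generalizing A with
  | zero => exact norm_nonneg A
  | succ k ih =>
    rw [pnorm_succ]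
    linarith [ih A, ih (omegaL T A), ih (omegaR T A), ih (omegaLR T A)]

theorem norm_le_pnorm (T : H →ₗ.[ℂ] H) (k : ℕ) (A : H →L[ℂ] H) : ‖A‖ ≤ pnorm T k A := by
  induction k generalizing A with
  | zero => rfl
  | succ k ih =>
    rw [pnorm_succ]
    linarith [ih A, pnorm_nonneg T k (omegaL T A), pnorm_nonneg T k (omegaR T A),
      pnorm_nonneg T k (omegaLR T A)]

section Pnorm

variable {𝔄 : Set (H →L[ℂ] H)}

theorem pnorm_add_le (hdense : Dense (T.domain : Set H)) (hA : A ∈ Jset T 𝔄 k)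
    (hB : B ∈ Jset T 𝔄 k) : pnorm T k (A + B) ≤ pnorm T k A + pnorm T k B := by
  induction k generalizing A B with
  | zero => exact norm_add_le A B
  | succ k ih =>
    obtain ⟨hA, hAω, hAl, hAr, hAlr⟩ := mem_Jset_succ.mp hA
    obtain ⟨hB, hBω, hBl, hBr, hBlr⟩ := mem_Jset_succ.mp hB
    rw [pnorm_succ, pnorm_succ, pnorm_succ, omegaL_add hAω hBω, omegaR_add hdense hAω hBω,
      omegaLR_add hdense hAω hBω]
    linarith [ih hA hB, ih hAl hBl, ih hAr hBr, ih hAlr hBlr]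

theorem pnorm_smul (hdense : Dense (T.domain : Set H)) (hA : A ∈ Jset T 𝔄 k) (c : ℂ) :
    pnorm T k (c • A) = ‖c‖ * pnorm T k A := by
  induction k generalizing A with
  | zero => exact norm_smul c A
  | succ k ih =>
    obtain ⟨hA, hAω, hAl, hAr, hAlr⟩ := mem_Jset_succ.mp hA
    rw [pnorm_succ, pnorm_succ, omegaL_smul hAω, omegaR_smul hdense hAω, omegaLR_smul hdense hAω,
      ih hA, ih hAl, ih hAr, ih hAlr]
    ring

theorem pnorm_mul_le (hdense : Dense (T.domain : Set H)) (hA : A ∈ Jset T 𝔄 k)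
    (hB : B ∈ Jset T 𝔄 k) : pnorm T k (A * B) ≤ pnorm T k A * pnorm T k B := by
  induction k generalizing A B with
  | zero => exact norm_mul_le A B
  | succ k ih =>
    obtain ⟨hA, hAω, hAl, -, -⟩ := mem_Jset_succ.mp hA
    obtain ⟨hB, hBω, -, hBr, -⟩ := mem_Jset_succ.mp hB
    calc pnorm T (k + 1) (A * B)
        = pnorm T k (A * B) + pnorm T k (omegaL T A * B) + pnorm T k (A * omegaR T B) +
            pnorm T k (omegaL T A * omegaR T B) := by
          rw [pnorm_succ, omegaL_mul hAω, omegaR_mul hdense A hBω, omegaLR_mul hdense hAω hBω]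
      _ ≤ pnorm T k A * pnorm T k B + pnorm T k (omegaL T A) * pnorm T k B +
            pnorm T k A * pnorm T k (omegaR T B) +
            pnorm T k (omegaL T A) * pnorm T k (omegaR T B) := by
          gcongr <;> [exact ih hA hB; exact ih hAl hB; exact ih hA hBr; exact ih hAl hBr]
      _ = (pnorm T k A + pnorm T k (omegaL T A)) * (pnorm T k B + pnorm T k (omegaR T B)) := by
          ring
      _ ≤ pnorm T (k + 1) A * pnorm T (k + 1) B := by
          have := pnorm_nonneg T k
          rw [pnorm_succ, pnorm_succ]
          apply mul_le_mul <;>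
            linarith [this A, this (omegaL T A), this (omegaR T A), this (omegaLR T A), this B,
              this (omegaL T B), this (omegaR T B), this (omegaLR T B)]

end Pnorm

variable {S : Type*} [SetLike S (H →L[ℂ] H)] {𝔄 : S}

theorem add_mem_Jset [AddMemClass S (H →L[ℂ] H)] (hdense : Dense (T.domain : Set H))
    (hA : A ∈ Jset T 𝔄 k) (hB : B ∈ Jset T 𝔄 k) : A + B ∈ Jset T 𝔄 k := by
  induction k generalizing A B with
  | zero => exact add_mem hA hB
  | succ k ih =>
    obtain ⟨hA, hAω, hAl, hAr, hAlr⟩ := mem_Jset_succ.mp hA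
    obtain ⟨hB, hBω, hBl, hBr, hBlr⟩ := mem_Jset_succ.mp hB
    refine mem_Jset_succ.mpr ⟨ih hA hB, hAω.add hBω, ?_, ?_, ?_⟩
    · rw [omegaL_add hAω hBω]; exact ih hAl hBl
    · rw [omegaR_add hdense hAω hBω]; exact ih hAr hBr
    · rw [omegaLR_add hdense hAω hBω]; exact ih hAlr hBlr

theorem smul_mem_Jset [SMulMemClass S ℂ (H →L[ℂ] H)] (hdense : Dense (T.domain : Set H))
    (hA : A ∈ Jset T 𝔄 k) (c : ℂ) : c • A ∈ Jset T 𝔄 k := by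
  induction k generalizing A with
  | zero => exact SMulMemClass.smul_mem c hA
  | succ k ih =>
    obtain ⟨hA, hAω, hAl, hAr, hAlr⟩ := mem_Jset_succ.mp hA
    refine mem_Jset_succ.mpr ⟨ih hA, hAω.smul c, ?_, ?_, ?_⟩
    · rw [omegaL_smul hAω]; exact ih hAl
    · rw [omegaR_smul hdense hAω]; exact ih hAr
    · rw [omegaLR_smul hdense hAω]; exact ih hAlr

theorem mul_mem_Jset [MulMemClass S (H →L[ℂ] H)] (hdense : Dense (T.domain : Set H))
    (hA : A ∈ Jset T 𝔄 k) (hB : B ∈ Jset T 𝔄 k) : A * B ∈ Jset T 𝔄 k := by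
  induction k generalizing A B with
  | zero => exact mul_mem hA hB
  | succ k ih =>
    obtain ⟨hA, hAω, hAl, -, -⟩ := mem_Jset_succ.mp hA
    obtain ⟨hB, hBω, -, hBr, -⟩ := mem_Jset_succ.mp hB
    refine mem_Jset_succ.mpr ⟨ih hA hB, hAω.mul hBω, ?_, ?_, ?_⟩
    · rw [omegaL_mul hAω]; exact ih hAl hB
    · rw [omegaR_mul hdense A hBω]; exact ih hA hBr
    · rw [omegaLR_mul hdense hAω hBω]; exact ih hAl hBr

end Scale

theorem statement9_general (T : H →ₗ.[ℂ] H) (hdense : Dense (T.domain : Set H))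
    (𝔄 : Subalgebra ℂ (H →L[ℂ] H)) (k : ℕ) :
    (∀ A B : H →L[ℂ] H, A ∈ Jset T ↑𝔄 k → B ∈ Jset T ↑𝔄 k →
      A + B ∈ Jset T ↑𝔄 k) ∧
    (∀ (c : ℂ) (A : H →L[ℂ] H), A ∈ Jset T ↑𝔄 k → c • A ∈ Jset T ↑𝔄 k) ∧
    (∀ A B : H →L[ℂ] H, A ∈ Jset T ↑𝔄 k → B ∈ Jset T ↑𝔄 k →
      A * B ∈ Jset T ↑𝔄 k ∧ pnorm T k (A * B) ≤ pnorm T k A * pnorm T k B) ∧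
    (∀ A ∈ Jset T ↑𝔄 k, ‖A‖ ≤ pnorm T k A) ∧
    (∀ A B : H →L[ℂ] H, A ∈ Jset T ↑𝔄 k → B ∈ Jset T ↑𝔄 k →
      pnorm T k (A + B) ≤ pnorm T k A + pnorm T k B) ∧
    (∀ (c : ℂ) (A : H →L[ℂ] H), A ∈ Jset T ↑𝔄 k →
      pnorm T k (c • A) = ‖c‖ * pnorm T k A) ∧
    (∀ A ∈ Jset T ↑𝔄 k, pnorm T k A = 0 → A = 0) ∧
    (∀ A B : H →L[ℂ] H, A ∈ Jset T ↑𝔄 1 → B ∈ Jset T ↑𝔄 1 →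
      omegaL T (A * B) = omegaL T A * B ∧ omegaR T (A * B) = A * omegaR T B ∧
      omegaLR T (A * B) = omegaL T A * omegaR T B) := by
  refine ⟨fun A B hA hB => add_mem_Jset hdense hA hB, fun c A hA => smul_mem_Jset hdense hA c,
    fun A B hA hB => ⟨mul_mem_Jset hdense hA hB, pnorm_mul_le hdense hA hB⟩,
    fun A _ => norm_le_pnorm T k A, fun A B hA hB => pnorm_add_le hdense hA hB,
    fun c A hA => pnorm_smul hdense hA c, fun A _ h0 => ?_, fun A B hA hB => ?_⟩
  · exact norm_le_zero_iff.mp (h0 ▸ norm_le_pnorm T k A)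
  · obtain ⟨-, hAω, -⟩ := mem_Jset_succ.mp hA
    obtain ⟨-, hBω, -⟩ := mem_Jset_succ.mp hB
    exact ⟨omegaL_mul hAω B, omegaR_mul hdense A hBω, omegaLR_mul hdense hAω hBω⟩

/-- For every `k`, `J_k` is a subalgebra of `𝔄` and `p_k` is a submultiplicative norm
on it dominating the operator norm; moreover `ω^ℓ(AB) = ω^ℓ(A)B`, `ω^r(AB) = A ω^r(B)`
and `ω^{ℓ,r}(AB) = ω^ℓ(A) ω^r(B)` for `A, B ∈ J_1`. -/
theorem statement9 (T : H →ₗ.[ℂ] H) (hdense : Dense (T.domain : Set H))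
    (hTclosed : IsClosed (T.graph : Set (H × H)))
    (𝔄 : Subalgebra ℂ (H →L[ℂ] H)) (h𝔄closed : IsClosed (𝔄 : Set (H →L[ℂ] H)))
    (h𝔄star : ∀ A ∈ 𝔄, ContinuousLinearMap.adjoint A ∈ 𝔄) (k : ℕ) :
    (∀ A B : H →L[ℂ] H, A ∈ Jset T ↑𝔄 k → B ∈ Jset T ↑𝔄 k →
      A + B ∈ Jset T ↑𝔄 k) ∧
    (∀ (c : ℂ) (A : H →L[ℂ] H), A ∈ Jset T ↑𝔄 k → c • A ∈ Jset T ↑𝔄 k) ∧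
    (∀ A B : H →L[ℂ] H, A ∈ Jset T ↑𝔄 k → B ∈ Jset T ↑𝔄 k →
      A * B ∈ Jset T ↑𝔄 k ∧ pnorm T k (A * B) ≤ pnorm T k A * pnorm T k B) ∧
    (∀ A ∈ Jset T ↑𝔄 k, ‖A‖ ≤ pnorm T k A) ∧
    (∀ A B : H →L[ℂ] H, A ∈ Jset T ↑𝔄 k → B ∈ Jset T ↑𝔄 k →
      pnorm T k (A + B) ≤ pnorm T k A + pnorm T k B) ∧
    (∀ (c : ℂ) (A : H →L[ℂ] H), A ∈ Jset T ↑𝔄 k →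
      pnorm T k (c • A) = ‖c‖ * pnorm T k A) ∧
    (∀ A ∈ Jset T ↑𝔄 k, pnorm T k A = 0 → A = 0) ∧
    (∀ A B : H →L[ℂ] H, A ∈ Jset T ↑𝔄 1 → B ∈ Jset T ↑𝔄 1 →
      omegaL T (A * B) = omegaL T A * B ∧ omegaR T (A * B) = A * omegaR T B ∧
      omegaLR T (A * B) = omegaL T A * omegaR T B) :=
  statement9_general T hdense 𝔄 k
end

section
/- Let H be a complex Hilbert space and let P be a bounded linear operator on H that has a bounded two-sided inverse P^{-1}. Then for every ε > 0 there exists a polynomial f ∈ ℂ[X] such that ‖P^{-1} − P*·f(P·P*)‖ < ε, where P* is the Hilbert-space adjoint of P and f(P·P*) denotes the evaluation of the polynomial f at the operator P·P*. Equivalently, P^{-1} lies in the operator-norm closure of the set {P*·f(P·P*) : f ∈ ℂ[X]}. -/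
/-!
With `a = P P*`, which is positive and invertible, we have `P⁻¹ = P* a⁻¹`. The spectrum of `a` lies
in `[r, ‖a‖]` for some `r > 0`, so `0 ≤ 1 - a / ‖a‖ ≤ 1 - r / ‖a‖ < 1` and the Neumann series of
`a / ‖a‖` converges. Its partial sums are polynomials in `a`, and multiplying them by `P*` gives
polynomial approximations `P* f(P P*)` of `P⁻¹`.
-/

open Polynomial Finset Filter Topology

theorem tendsto_sum_range_pow_one_sub {R : Type*} [NormedRing R] [HasSummableGeomSeries R]
    {x : R} (hx : ‖1 - x‖ < 1) :
    Tendsto (fun n ↦ ∑ i ∈ range n, (1 - x) ^ i) atTop (𝓝 (Ring.inverse x)) := by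
  simpa using (hasSum_geom_series_inverse (1 - x) hx).tendsto_sum_nat

noncomputable def neumannPoly {R : Type*} [CommRing R] (t : R) (n : ℕ) : R[X] :=
  C t * ∑ i ∈ range n, (1 - C t * X) ^ i

theorem aeval_neumannPoly {R A : Type*} [CommRing R] [Ring A] [Algebra R A] (a : A) (t : R)
    (n : ℕ) : aeval a (neumannPoly t n) = t • ∑ i ∈ range n, (1 - t • a) ^ i := by
  simp [neumannPoly, Algebra.smul_def]

theorem tendsto_aeval_neumannPoly {A : Type*} [NormedRing A] [NormedAlgebra ℂ A] [CompleteSpace A]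
    (u : Aˣ) {t : ℂ} (ht : ‖1 - t • (u : A)‖ < 1) :
    Tendsto (fun n ↦ aeval (u : A) (neumannPoly t n)) atTop (𝓝 ↑u⁻¹) := by
  have hunit : IsUnit (t • (u : A)) := by
    simpa using isUnit_one_sub_of_norm_lt_one ht
  have hlim : t • Ring.inverse (t • (u : A)) = ↑u⁻¹ := by
    refine Units.eq_inv_of_mul_eq_one_right ?_
    rw [smul_mul_assoc, ← mul_smul_comm, Ring.inverse_mul_cancel _ hunit]
  simp_rw [aeval_neumannPoly, ← hlim]
  exact (tendsto_sum_range_pow_one_sub ht).const_smul t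

section CStarAlgebra

variable {A : Type*} [CStarAlgebra A] [PartialOrder A] [StarOrderedRing A]

theorem IsStrictlyPositive.norm_one_sub_inv_norm_smul_lt_one {a : A}
    (ha : IsStrictlyPositive a) : ‖1 - ‖a‖⁻¹ • a‖ < 1 := by
  nontriviality A
  obtain ⟨r, hr, hra⟩ := (CFC.exists_pos_algebraMap_le_iff ha.isSelfAdjoint).2
    fun x hx ↦ ha.spectrum_pos hx
  have hna : 0 < ‖a‖ := norm_pos_iff.2 ha.isUnit.ne_zero
  have hr_le : r ≤ ‖a‖ := by
    simpa [norm_algebraMap', abs_of_pos hr] using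
      CStarAlgebra.norm_le_norm_of_nonneg_of_le (algebraMap_nonneg A hr.le) hra
  set t := ‖a‖⁻¹ with ht
  have htpos : 0 < t := inv_pos.2 hna
  have hsmul (s : ℝ) : t • algebraMap ℝ A s = algebraMap ℝ A (t * s) := by
    rw [Algebra.smul_def, map_mul]
  have hnonneg : 0 ≤ 1 - t • a := by
    have := smul_le_smul_of_nonneg_left ha.isSelfAdjoint.le_algebraMap_norm_self htpos.le
    rwa [hsmul, inv_mul_cancel₀ hna.ne', map_one, ← sub_nonneg] at this
  have hle : 1 - t • a ≤ algebraMap ℝ A (1 - t * r) := by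
    have := smul_le_smul_of_nonneg_left hra htpos.le
    rw [hsmul] at this
    simpa [map_sub] using sub_le_sub_left this 1
  calc ‖1 - t • a‖ ≤ 1 - t * r := by
        refine (CStarAlgebra.norm_le_iff_le_algebraMap _ ?_ hnonneg).2 hle
        rwa [sub_nonneg, ht, inv_mul_le_one₀ hna]
    _ < 1 := by linarith [mul_pos htpos hr]

theorem Units.tendsto_star_mul_aeval_neumannPoly (p : Aˣ) :
    Tendsto (fun n ↦ star (p : A) *
        aeval ((p : A) * star (p : A)) (neumannPoly (‖(p : A) * star (p : A)‖⁻¹ : ℂ) n))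
      atTop (𝓝 ↑p⁻¹) := by
  set u : Aˣ := p * star p
  have hu : (u : A) = p * star (p : A) := rfl
  have hpos : IsStrictlyPositive (u : A) :=
    u.isUnit.isStrictlyPositive (hu ▸ mul_star_self_nonneg _)
  have hnorm : ‖1 - (‖(u : A)‖⁻¹ : ℂ) • (u : A)‖ < 1 := by
    simpa [← Complex.ofReal_inv, Complex.coe_smul] using hpos.norm_one_sub_inv_norm_smul_lt_one
  have hinv : star (p : A) * ↑u⁻¹ = ↑p⁻¹ := by
    simp [u, mul_inv_rev, ← mul_assoc, ← star_mul]
  rw [← hinv, ← hu]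
  exact (tendsto_aeval_neumannPoly u hnorm).const_mul _

theorem Units.inv_mem_closure_star_mul_aeval (p : Aˣ) :
    (↑p⁻¹ : A) ∈
      closure (Set.range fun f : ℂ[X] ↦ star (p : A) * aeval ((p : A) * star (p : A)) f) :=
  mem_closure_of_tendsto p.tendsto_star_mul_aeval_neumannPoly (.of_forall fun _ ↦ ⟨_, rfl⟩)

end CStarAlgebra

/-- If `P` is a bounded operator on a complex Hilbert space with bounded two-sided
inverse `Q = P⁻¹`, then for every `ε > 0` there is a polynomial `f` with
`‖P⁻¹ − P* f(P P*)‖ < ε`; i.e. `P⁻¹` is a norm limit of operators `P* f(P P*)`. -/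
theorem statement13 {H : Type*} [NormedAddCommGroup H] [InnerProductSpace ℂ H]
    [CompleteSpace H] (P Q : H →L[ℂ] H) (hPQ : P * Q = 1) (hQP : Q * P = 1)
    (ε : ℝ) (hε : 0 < ε) :
    ∃ f : Polynomial ℂ,
      ‖Q - ContinuousLinearMap.adjoint P *
          Polynomial.aeval (P * ContinuousLinearMap.adjoint P) f‖ < ε := by
  let u : (H →L[ℂ] H)ˣ := ⟨P, Q, hPQ, hQP⟩
  obtain ⟨_, ⟨f, rfl⟩, hf⟩ := Metric.mem_closure_iff.1 u.inv_mem_closure_star_mul_aeval ε hε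
  exact ⟨f, by rwa [dist_eq_norm] at hf⟩
end
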